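/- arXiv:2004.08958 — 4 statements merged into one kernel-verified Lean document; each statement's English description precedes it below -/
import Mathlib

section
/- Asymptotics of the MRE: under primitivity of M (with stationary distribution q) and the assumption that the coarsest common refinement of all partitions with positive recombination probability is the singleton partition, the solution of the migration-recombination equation converges: μ_t(α) → μ_∞(α) = ⊗_{i=1}^n μ_∞^{{i}}(α) with μ_∞^{{i}}(α) = ∑_{β∈L} q(β) μ_0^{{i}}(β) (independent of α); moreover there is γ ∈ (0,1) such that μ_t = μ_∞ + O(γ^t), uniformly in μ_0. -/
open scoped Classical

variable {n : ℕ}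

/-- `P` is a partition of the finite set `U` of sites. -/
def IsPartition (U : Finset (Fin n)) (P : Finset (Finset (Fin n))) : Prop :=
  (∀ b ∈ P, b.Nonempty) ∧ (∀ b ∈ P, ∀ c ∈ P, b ≠ c → Disjoint b c) ∧ P.sup id = U

/-- A labelled partition of `U` (with labels in `L`), encoded as a finite set of
(block, label) pairs whose blocks form a partition of `U`. -/
def IsLabelledPartition {L : Type*} (U : Finset (Fin n)) (D : Finset (Finset (Fin n) × L)) : Prop :=
  IsPartition U (D.image Prod.fst) ∧ ∀ p ∈ D, ∀ q ∈ D, p.1 = q.1 → p = q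

/-- The induced labelled partition `𝛅|_V`. -/
noncomputable def restrictL {L : Type*} (D : Finset (Finset (Fin n) × L)) (V : Finset (Fin n)) :
    Finset (Finset (Fin n) × L) :=
  (D.image fun p => (p.1 ∩ V, p.2)).filter fun p => p.1.Nonempty

/-- The induced (unlabelled) partition `δ|_V`. -/
def restrictP (P : Finset (Finset (Fin n))) (V : Finset (Fin n)) : Finset (Finset (Fin n)) :=
  (P.image fun d => d ∩ V).filter fun d => d.Nonempty

/-- `𝛆` is finer than `𝛅` (the base of `𝛆` refines the base of `𝛅`). -/
def RefinesL {L : Type*} (E D : Finset (Finset (Fin n) × L)) : Prop :=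
  ∀ p ∈ E, ∃ q ∈ D, p.1 ⊆ q.1

/-- `ε` refines `δ` for unlabelled partitions. -/
def RefinesP (Q P : Finset (Finset (Fin n))) : Prop :=
  ∀ e ∈ Q, ∃ d ∈ P, e ⊆ d

/-- Configurations (marginal types) over a subset `U` of sites. -/
abbrev Cfg (A : Fin n → Type*) (U : Finset (Fin n)) : Type _ :=
  ∀ i : U, A i.1

/-- Restriction of a configuration to a smaller index set. -/
def res (A : Fin n → Type*) {U V : Finset (Fin n)} (h : V ⊆ U) (x : Cfg A U) : Cfg A V :=
  fun i => x ⟨i.1, h i.2⟩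

/-- Marginal of a measure (as a function on configurations) with respect to `V ⊆ U`. -/
noncomputable def marg (A : Fin n → Type*) [∀ i, Fintype (A i)]
    {U V : Finset (Fin n)} (h : V ⊆ U) (ν : Cfg A U → ℝ) : Cfg A V → ℝ :=
  fun x => ∑ y : Cfg A U, if res A h y = x then ν y else 0

/-- The labelled recombinator `R^U_𝛅(ν) = ⊗_{(d,λ)∈𝛅} ν^d(λ)`, evaluated pointwise. -/
noncomputable def recomb (A : Fin n → Type*) [∀ i, Fintype (A i)] {L : Type*}
    {U : Finset (Fin n)} (D : Finset (Finset (Fin n) × L)) (ν : L → Cfg A U → ℝ) :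
    Cfg A U → ℝ :=
  fun x => ∏ p ∈ D, marg A (Finset.inter_subset_right : p.1 ∩ U ⊆ U) (ν p.2)
      (res A (Finset.inter_subset_right : p.1 ∩ U ⊆ U) x)

/-- The finite set of all partitions of `U`. -/
noncomputable def partitionsOf (U : Finset (Fin n)) : Finset (Finset (Finset (Fin n))) :=
  Finset.univ.filter fun P => IsPartition U P

/-- The finite set of all labelled partitions of `U` with labels in `L`. -/
noncomputable def lpartitionsOf (L : Type*) [Fintype L] (U : Finset (Fin n)) :
    Finset (Finset (Finset (Fin n) × L)) :=
  Finset.univ.filter fun D => IsLabelledPartition U D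

/-- The migration-recombination probability `p_𝛅(α) = r_δ ∏_{(d,λ)∈𝛅} M(α,λ)`. -/
def pmr {L : Type*} (M : L → L → ℝ) (r : Finset (Finset (Fin n)) → ℝ)
    (D : Finset (Finset (Fin n) × L)) (α : L) : ℝ :=
  r (D.image Prod.fst) * ∏ p ∈ D, M α p.2

/-- One step of the migration-recombination equation (MRE), evaluated pointwise:
`μ'(α) = ∑_δ r_δ ⊗_{d∈δ} ∑_β M(α,β) μ^d(β)`. -/
noncomputable def MREstep (A : Fin n → Type*) [∀ i, Fintype (A i)] {L : Type*} [Fintype L]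
    (M : L → L → ℝ) (r : Finset (Finset (Fin n)) → ℝ)
    (μ : L → Cfg A Finset.univ → ℝ) (α : L) : Cfg A Finset.univ → ℝ :=
  fun x => ∑ P ∈ partitionsOf (Finset.univ : Finset (Fin n)), r P *
    ∏ d ∈ P, ∑ β : L, M α β *
      marg A (Finset.subset_univ d) (μ β) (res A (Finset.subset_univ d) x)


section Basics

variable (A : Fin n → Type*) [∀ i, Fintype (A i)]

lemma res_res {U V W : Finset (Fin n)} (h1 : V ⊆ U) (h2 : W ⊆ V) (x : Cfg A U) :
    res A h2 (res A h1 x) = res A (h2.trans h1) x := rfl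

lemma res_self {U : Finset (Fin n)} (h : U ⊆ U) (x : Cfg A U) : res A h x = x := rfl

lemma marg_self {U : Finset (Fin n)} (h : U ⊆ U) (ν : Cfg A U → ℝ) (x : Cfg A U) :
    marg A h ν x = ν x := by
  simp [marg, res_self]
  exact (Finset.sum_eq_single x (fun b _ hb => by simp [hb]) (by simp)).trans (by simp)

lemma marg_nonneg {U V : Finset (Fin n)} (h : V ⊆ U) (ν : Cfg A U → ℝ)
    (hν : ∀ y, 0 ≤ ν y) (x : Cfg A V) : 0 ≤ marg A h ν x := by
  apply Finset.sum_nonneg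
  intro y _
  split <;> simp [hν]

lemma marg_le_mass {U V : Finset (Fin n)} (h : V ⊆ U) (ν : Cfg A U → ℝ)
    (hν : ∀ y, 0 ≤ ν y) (x : Cfg A V) : marg A h ν x ≤ ∑ y, ν y := by
  apply Finset.sum_le_sum
  intro y _
  split <;> simp [hν]

lemma sum_marg {U V : Finset (Fin n)} (h : V ⊆ U) (ν : Cfg A U → ℝ) :
    ∑ x, marg A h ν x = ∑ y, ν y := by
  unfold marg
  rw [Finset.sum_comm]
  apply Finset.sum_congr rfl
  intro y _
  simp

lemma marg_marg {U V W : Finset (Fin n)} (h1 : V ⊆ U) (h2 : W ⊆ V) (ν : Cfg A U → ℝ)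
    (x : Cfg A W) : marg A h2 (marg A h1 ν) x = marg A (h2.trans h1) ν x := by
  unfold marg
  calc (∑ z : Cfg A V, if res A h2 z = x then ∑ y : Cfg A U, if res A h1 y = z then ν y else 0
        else 0)
      = ∑ z : Cfg A V, ∑ y : Cfg A U,
          if res A h1 y = z then (if res A h2 z = x then ν y else 0) else 0 := by
        apply Finset.sum_congr rfl
        intro z _
        split
        · apply Finset.sum_congr rfl
          intro y _
          split <;> simp_all
        · simp_all
    _ = ∑ y : Cfg A U, ∑ z : Cfg A V,
          if res A h1 y = z then (if res A h2 z = x then ν y else 0) else 0 :=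
        Finset.sum_comm
    _ = ∑ y : Cfg A U, if res A (h2.trans h1) y = x then ν y else 0 := by
        apply Finset.sum_congr rfl
        intro y _
        rw [Finset.sum_ite_eq (Finset.univ : Finset (Cfg A V)) (res A h1 y)]
        simp only [Finset.mem_univ, if_true]
        rw [← res_res A h1 h2]

lemma marg_sum {U V : Finset (Fin n)} (h : V ⊆ U) {ι : Type*} (s : Finset ι)
    (f : ι → Cfg A U → ℝ) (x : Cfg A V) :
    marg A h (fun y => ∑ i ∈ s, f i y) x = ∑ i ∈ s, marg A h (f i) x := by
  unfold marg
  rw [Finset.sum_comm]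
  apply Finset.sum_congr rfl
  intro y _
  split <;> simp

lemma marg_smul {U V : Finset (Fin n)} (h : V ⊆ U) (c : ℝ) (ν : Cfg A U → ℝ) (x : Cfg A V) :
    marg A h (fun y => c * ν y) x = c * marg A h ν x := by
  unfold marg
  rw [Finset.mul_sum]
  apply Finset.sum_congr rfl
  intro y _
  split <;> simp

end Basics

section Empty

variable (A : Fin n → Type*) [∀ i, Fintype (A i)]

lemma cfg_empty_subsingleton : Subsingleton (Cfg A ∅) := by
  constructor
  intro a b
  funext i
  exact absurd i.2 (Finset.notMem_empty i.1)

lemma marg_empty {U : Finset (Fin n)} (h : (∅ : Finset (Fin n)) ⊆ U) (ν : Cfg A U → ℝ)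
    (x : Cfg A (∅ : Finset (Fin n))) : marg A h ν x = ∑ y, ν y := by
  unfold marg
  apply Finset.sum_congr rfl
  intro y _
  rw [if_pos]
  exact (cfg_empty_subsingleton A).allEq _ _

end Empty

section Blocks

variable (A : Fin n → Type*) [∀ i, Fintype (A i)]
lemma exists_unique_block (P : Finset (Finset (Fin n))) (hdisj : ∀ b ∈ P, ∀ c ∈ P, b ≠ c → Disjoint b c)
    (hsup : P.sup id = (Finset.univ : Finset (Fin n))) (i : Fin n) : ∃! d, d ∈ P ∧ i ∈ d := by
  have hi : i ∈ P.sup id := hsup ▸ Finset.mem_univ i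
  rw [Finset.mem_sup] at hi
  obtain ⟨d, hd, hid⟩ := hi
  refine ⟨d, ⟨hd, hid⟩, ?_⟩
  rintro e ⟨he, hie⟩
  by_contra hne
  exact (Finset.disjoint_left.mp (hdisj e he d hd hne)) hie hid

noncomputable def blk (P : Finset (Finset (Fin n)))
    (hdisj : ∀ b ∈ P, ∀ c ∈ P, b ≠ c → Disjoint b c)
    (hsup : P.sup id = (Finset.univ : Finset (Fin n))) (i : Fin n) : Finset (Fin n) :=
  P.choose (fun d => i ∈ d) (by
    obtain ⟨d, hd, hu⟩ := exists_unique_block P hdisj hsup i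
    exact ⟨d, hd, fun e he => hu e he⟩)

lemma blk_mem (P : Finset (Finset (Fin n)))
    (hdisj : ∀ b ∈ P, ∀ c ∈ P, b ≠ c → Disjoint b c)
    (hsup : P.sup id = (Finset.univ : Finset (Fin n))) (i : Fin n) : blk P hdisj hsup i ∈ P := by
  unfold blk; exact Finset.choose_mem _ _ _

lemma mem_blk (P : Finset (Finset (Fin n)))
    (hdisj : ∀ b ∈ P, ∀ c ∈ P, b ≠ c → Disjoint b c)
    (hsup : P.sup id = (Finset.univ : Finset (Fin n))) (i : Fin n) : i ∈ blk P hdisj hsup i := by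
  unfold blk; exact Finset.choose_property (fun d => i ∈ d) P _

lemma blk_eq (P : Finset (Finset (Fin n)))
    (hdisj : ∀ b ∈ P, ∀ c ∈ P, b ≠ c → Disjoint b c)
    (hsup : P.sup id = (Finset.univ : Finset (Fin n))) {i : Fin n} {d : Finset (Fin n)} (hd : d ∈ P) (hi : i ∈ d) :
    d = blk P hdisj hsup i :=
  (exists_unique_block P hdisj hsup i).unique ⟨hd, hi⟩ ⟨blk_mem P hdisj hsup i,
    mem_blk P hdisj hsup i⟩

noncomputable def cfgBlocks (P : Finset (Finset (Fin n)))
    (hdisj : ∀ b ∈ P, ∀ c ∈ P, b ≠ c → Disjoint b c)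
    (hsup : P.sup id = (Finset.univ : Finset (Fin n))) : Cfg A (Finset.univ : Finset (Fin n)) ≃
    ((d : {d // d ∈ P}) → Cfg A d.1) where
  toFun y d := res A (Finset.subset_univ d.1) y
  invFun z i := z ⟨blk P hdisj hsup i.1, blk_mem P hdisj hsup i.1⟩
      ⟨i.1, mem_blk P hdisj hsup i.1⟩
  left_inv y := rfl
  right_inv z := by
    funext d j
    show z ⟨blk P hdisj hsup j.1, _⟩ ⟨j.1, _⟩ = z d j
    obtain ⟨d, hd⟩ := d
    obtain ⟨jv, hj⟩ := j
    have hbd : d = blk P hdisj hsup jv := blk_eq P hdisj hsup hd hj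
    subst hbd
    rfl

lemma res_cfgBlocks_symm (P : Finset (Finset (Fin n)))
    (hdisj : ∀ b ∈ P, ∀ c ∈ P, b ≠ c → Disjoint b c)
    (hsup : P.sup id = (Finset.univ : Finset (Fin n))) (z : (d : {d // d ∈ P}) → Cfg A d.1) (d : Finset (Fin n)) (hd : d ∈ P) :
    res A (Finset.subset_univ d) ((cfgBlocks A P hdisj hsup).symm z) = z ⟨d, hd⟩ :=
  congrFun ((cfgBlocks A P hdisj hsup).right_inv z) ⟨d, hd⟩

lemma cond_iff (P : Finset (Finset (Fin n)))
    (hdisj : ∀ b ∈ P, ∀ c ∈ P, b ≠ c → Disjoint b c)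
    (hsup : P.sup id = (Finset.univ : Finset (Fin n))) (U : Finset (Fin n)) (x : Cfg A U) (z : (d : {d // d ∈ P}) → Cfg A d.1) :
    res A (Finset.subset_univ U) ((cfgBlocks A P hdisj hsup).symm z) = x ↔
    ∀ d : {d // d ∈ P},
      res A (Finset.inter_subset_left : d.1 ∩ U ⊆ d.1) (z d) =
      res A (Finset.inter_subset_right : d.1 ∩ U ⊆ U) x := by
  constructor
  · intro h d
    rw [← res_cfgBlocks_symm A P hdisj hsup z d.1 d.2, ← h]
    rfl
  · intro h
    funext i
    have hib : i.1 ∈ blk P hdisj hsup i.1 ∩ U := Finset.mem_inter.mpr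
      ⟨mem_blk P hdisj hsup i.1, i.2⟩
    have := congrFun (h ⟨blk P hdisj hsup i.1, blk_mem P hdisj hsup i.1⟩) ⟨i.1, hib⟩
    exact this

lemma marg_prod_blocks (P : Finset (Finset (Fin n)))
    (hdisj : ∀ b ∈ P, ∀ c ∈ P, b ≠ c → Disjoint b c)
    (hsup : P.sup id = (Finset.univ : Finset (Fin n))) (G : (d : Finset (Fin n)) → Cfg A d → ℝ) (U : Finset (Fin n))
    (x : Cfg A U) :
    marg A (Finset.subset_univ U)
      (fun y => ∏ d ∈ P, G d (res A (Finset.subset_univ d) y)) x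
    = ∏ d ∈ P, marg A (Finset.inter_subset_left : d ∩ U ⊆ d) (G d)
        (res A (Finset.inter_subset_right : d ∩ U ⊆ U) x) := by
  classical
  unfold marg
  rw [← Equiv.sum_comp (cfgBlocks A P hdisj hsup).symm]
  have step1 : ∀ z : (d : {d // d ∈ P}) → Cfg A d.1,
      (if res A (Finset.subset_univ U) ((cfgBlocks A P hdisj hsup).symm z) = x then
        ∏ d ∈ P, G d (res A (Finset.subset_univ d) ((cfgBlocks A P hdisj hsup).symm z)) else 0)
      = ∏ d : {d // d ∈ P},
          (if res A (Finset.inter_subset_left : d.1 ∩ U ⊆ d.1) (z d) =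
              res A (Finset.inter_subset_right : d.1 ∩ U ⊆ U) x then G d.1 (z d) else 0) := by
    intro z
    have hprodG : ∏ d ∈ P, G d (res A (Finset.subset_univ d) ((cfgBlocks A P hdisj hsup).symm z))
        = ∏ d : {d // d ∈ P}, G d.1 (z d) := by
      rw [← Finset.prod_attach P (fun d => G d (res A (Finset.subset_univ d)
        ((cfgBlocks A P hdisj hsup).symm z))), Finset.univ_eq_attach]
      apply Finset.prod_congr rfl
      intro d _
      rw [res_cfgBlocks_symm A P hdisj hsup z d.1 d.2]
    by_cases hall : ∀ d : {d // d ∈ P},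
        res A (Finset.inter_subset_left : d.1 ∩ U ⊆ d.1) (z d) =
        res A (Finset.inter_subset_right : d.1 ∩ U ⊆ U) x
    · rw [if_pos ((cond_iff A P hdisj hsup U x z).mpr hall), hprodG]
      exact (Finset.prod_congr rfl fun d _ => (if_pos (hall d)).symm)
    · rw [if_neg (fun hc => hall ((cond_iff A P hdisj hsup U x z).mp hc))]
      obtain ⟨d0, hd0⟩ := not_forall.mp hall
      symm
      apply Finset.prod_eq_zero (Finset.mem_univ d0)
      rw [if_neg hd0]
  rw [Finset.sum_congr rfl fun z _ => step1 z]
  rw [← Finset.prod_attach P (fun d => ∑ y : Cfg A d,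
        if res A (Finset.inter_subset_left : d ∩ U ⊆ d) y =
          res A (Finset.inter_subset_right : d ∩ U ⊆ U) x then G d y else 0),
    ← Finset.univ_eq_attach]
  rw [Fintype.prod_sum]

end Blocks

section Rec

variable (A : Fin n → Type*) [∀ i, Fintype (A i)] {L : Type*} [Fintype L]

lemma MREstep_marg (M : L → L → ℝ) (r : Finset (Finset (Fin n)) → ℝ)
    (μ : L → Cfg A Finset.univ → ℝ) (α : L) (U : Finset (Fin n)) (x : Cfg A U) :
    marg A (Finset.subset_univ U) (MREstep A M r μ α) x
    = ∑ P ∈ partitionsOf (Finset.univ : Finset (Fin n)), r P *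
        ∏ d ∈ P, ∑ β, M α β * marg A (Finset.subset_univ (d ∩ U)) (μ β)
          (res A (Finset.inter_subset_right : d ∩ U ⊆ U) x) := by
  unfold MREstep
  rw [marg_sum]
  apply Finset.sum_congr rfl
  intro P hP
  rw [marg_smul]
  congr 1
  obtain ⟨hne, hdisj, hsup⟩ : IsPartition Finset.univ P := by
    simpa [partitionsOf] using hP
  rw [marg_prod_blocks A P hdisj hsup
    (fun d => fun z => ∑ β, M α β * marg A (Finset.subset_univ d) (μ β) z) U x]
  apply Finset.prod_congr rfl
  intro d _
  rw [marg_sum]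
  apply Finset.sum_congr rfl
  intro β _
  rw [marg_smul]
  congr 1
  exact marg_marg A (Finset.subset_univ d) Finset.inter_subset_left (μ β) _

end Rec

section Doeblin

variable {L : Type*} [Fintype L] [Nonempty L]

noncomputable def osc (w : L → ℝ) : ℝ :=
  Finset.univ.sup' Finset.univ_nonempty w - Finset.univ.inf' Finset.univ_nonempty w

lemma inf_le_sup' (w : L → ℝ) :
    Finset.univ.inf' Finset.univ_nonempty w ≤ Finset.univ.sup' Finset.univ_nonempty w :=
  le_trans (Finset.inf'_le _ (Finset.mem_univ (Classical.arbitrary L)))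
    (Finset.le_sup' _ (Finset.mem_univ _))

lemma osc_nonneg (w : L → ℝ) : 0 ≤ osc w := sub_nonneg.mpr (inf_le_sup' w)

lemma abs_sub_le_osc (w : L → ℝ) (a b : L) : |w a - w b| ≤ osc w := by
  rw [abs_sub_le_iff]
  constructor
  · exact sub_le_sub (Finset.le_sup' _ (Finset.mem_univ a)) (Finset.inf'_le _ (Finset.mem_univ b))
  · exact sub_le_sub (Finset.le_sup' _ (Finset.mem_univ b)) (Finset.inf'_le _ (Finset.mem_univ a))

lemma osc_le_of_bounds (w : L → ℝ) (lo hi : ℝ) (h0 : ∀ a, lo ≤ w a) (h1 : ∀ a, w a ≤ hi) :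
    osc w ≤ hi - lo := by
  unfold osc
  apply sub_le_sub
  · exact Finset.sup'_le _ _ fun a _ => h1 a
  · exact Finset.le_inf' _ _ fun a _ => h0 a

lemma osc_mul_le (S : L → L → ℝ) (hS1 : ∀ a, ∑ b, S a b = 1)
    (ε : ℝ) (hε0 : 0 ≤ ε) (hεS : ∀ a b, ε ≤ S a b) (w : L → ℝ) :
    osc (fun a => ∑ b, S a b * w b) ≤ (1 - ε) * osc w := by
  obtain ⟨a, _, ha⟩ := Finset.exists_mem_eq_sup' (Finset.univ_nonempty (α := L))
    (fun a => ∑ b, S a b * w b)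
  obtain ⟨a', _, ha'⟩ := Finset.exists_mem_eq_inf' (Finset.univ_nonempty (α := L))
    (fun a => ∑ b, S a b * w b)
  show Finset.univ.sup' _ _ - Finset.univ.inf' _ _ ≤ _
  rw [ha, ha']
  set m : L → ℝ := fun b => min (S a b) (S a' b) with hm
  have hm0 : ∀ b, 0 ≤ m b := fun b => le_trans hε0 (le_min (hεS a b) (hεS a' b))
  have hm1 : ∑ b, m b ≤ 1 := by
    rw [← hS1 a]
    exact Finset.sum_le_sum fun b _ => min_le_left _ _
  have hmε : ε ≤ ∑ b, m b :=
    le_trans (le_min (hεS a (Classical.arbitrary L)) (hεS a' (Classical.arbitrary L)))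
      (Finset.single_le_sum (fun b _ => hm0 b) (Finset.mem_univ _))
  set sup := Finset.univ.sup' Finset.univ_nonempty w with hsup
  set inf := Finset.univ.inf' Finset.univ_nonempty w with hinf
  have e1 : ∑ b, (S a b - m b) * w b = ∑ b, S a b * w b - ∑ b, m b * w b := by
    rw [← Finset.sum_sub_distrib]
    exact Finset.sum_congr rfl fun b _ => by ring
  have e2 : ∑ b, (S a' b - m b) * w b = ∑ b, S a' b * w b - ∑ b, m b * w b := by
    rw [← Finset.sum_sub_distrib]
    exact Finset.sum_congr rfl fun b _ => by ring
  have up : ∑ b, (S a b - m b) * w b ≤ (1 - ∑ b, m b) * sup := by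
    have : (1 - ∑ b, m b) * sup = ∑ b, (S a b - m b) * sup := by
      rw [← Finset.sum_mul, Finset.sum_sub_distrib, hS1]
    rw [this]
    refine Finset.sum_le_sum fun b _ => ?_
    exact mul_le_mul_of_nonneg_left (Finset.le_sup' w (Finset.mem_univ b))
      (by simp only [sub_nonneg]; exact min_le_left _ _)
  have lo : (1 - ∑ b, m b) * inf ≤ ∑ b, (S a' b - m b) * w b := by
    have : (1 - ∑ b, m b) * inf = ∑ b, (S a' b - m b) * inf := by
      rw [← Finset.sum_mul, Finset.sum_sub_distrib, hS1]
    rw [this]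
    refine Finset.sum_le_sum fun b _ => ?_
    exact mul_le_mul_of_nonneg_left (Finset.inf'_le w (Finset.mem_univ b))
      (by simp only [sub_nonneg]; exact min_le_right _ _)
  have key : (∑ b, S a b * w b) - (∑ b, S a' b * w b) ≤ (1 - ∑ b, m b) * (sup - inf) := by
    have h3 := sub_le_sub up lo
    rw [e1, e2] at h3
    have h4 : (1 - ∑ b, m b) * (sup - inf) = (1 - ∑ b, m b) * sup - (1 - ∑ b, m b) * inf := by
      ring
    linarith
  refine le_trans key ?_
  have hoscw : 0 ≤ sup - inf := sub_nonneg.mpr (inf_le_sup' w)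
  have : osc w = sup - inf := rfl
  rw [this]
  exact mul_le_mul_of_nonneg_right (by linarith) hoscw

end Doeblin

section DoeblinMain

variable {L : Type*} [Fintype L]

lemma geom_div_le (ε : ℝ) (hε0 : 0 < ε) (hε1 : ε ≤ 1/2) (k : ℕ) (hk : 0 < k) (t : ℕ) :
    (1 - ε) ^ (t / k) ≤ (1 - ε)⁻¹ * ((1 - ε) ^ ((k : ℝ)⁻¹)) ^ t := by
  have h0 : (0:ℝ) < 1 - ε := by linarith
  have h1 : 1 - ε ≤ 1 := by linarith
  have hrhs : ((1 - ε) ^ ((k : ℝ)⁻¹)) ^ t = (1 - ε) ^ ((k : ℝ)⁻¹ * t) := by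
    rw [← Real.rpow_natCast ((1 - ε) ^ ((k:ℝ)⁻¹)) t, ← Real.rpow_mul h0.le]
  have hlhs : (1 - ε) ^ (t / k) = (1 - ε) ^ (((t / k : ℕ) : ℝ)) := by
    rw [Real.rpow_natCast]
  rw [hlhs, hrhs]
  have hsub : (1 - ε)⁻¹ * (1 - ε) ^ ((k : ℝ)⁻¹ * t) = (1 - ε) ^ ((k : ℝ)⁻¹ * t - 1) := by
    rw [Real.rpow_sub h0, Real.rpow_one]
    ring
  rw [hsub]
  apply Real.rpow_le_rpow_of_exponent_ge h0 h1
  -- need : k⁻¹ * t - 1 ≤ (t / k : ℕ)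
  have hmod : (t : ℝ) = ((t / k : ℕ) : ℝ) * k + ((t % k : ℕ) : ℝ) := by
    have h := Nat.div_add_mod t k
    calc (t:ℝ) = ((t / k * k + t % k : ℕ) : ℝ) := Nat.cast_inj.mpr (Nat.div_add_mod' t k).symm
      _ = ((t / k : ℕ) : ℝ) * k + ((t % k : ℕ) : ℝ) := by push_cast; ring
  have hmlt : ((t % k : ℕ) : ℝ) < k := by
    exact_mod_cast Nat.mod_lt t hk
  have hkpos : (0:ℝ) < k := by exact_mod_cast hk
  rw [sub_le_iff_le_add, inv_mul_eq_div, div_le_iff₀ hkpos]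
  nlinarith [hmod, hmlt]

lemma doeblin_conv [DecidableEq L] [Nonempty L] (M : L → L → ℝ) (hM0 : ∀ a b, 0 ≤ M a b)
    (hM1 : ∀ a, ∑ b, M a b = 1)
    (hprim : ∃ k : ℕ, 0 < k ∧ ∀ a b, 0 < ((Matrix.of M) ^ k) a b)
    (q : L → ℝ) (hq0 : ∀ a, 0 ≤ q a) (hq1 : ∑ a, q a = 1)
    (hqstat : ∀ b, ∑ a, q a * M a b = q b) :
    ∃ γ ∈ Set.Ioo (0:ℝ) 1, ∃ C > (0:ℝ), ∀ v : ℕ → L → ℝ,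
      (∀ t a, v (t+1) a = ∑ b, M a b * v t b) →
      (∀ b, 0 ≤ v 0 b ∧ v 0 b ≤ 1) →
      ∀ t a, |v t a - ∑ b, q b * v 0 b| ≤ C * γ ^ t := by
  classical
  obtain ⟨k, hk, hkpos⟩ := hprim
  have hpow0 : ∀ s a b, 0 ≤ ((Matrix.of M) ^ s) a b := by
    intro s
    induction s with
    | zero => intro a b; rw [pow_zero]; by_cases h : a = b <;> simp [Matrix.one_apply, h]
    | succ s ih =>
      intro a b
      rw [pow_succ, Matrix.mul_apply]
      exact Finset.sum_nonneg fun c _ => mul_nonneg (ih a c) (hM0 c b)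
  have hpow1 : ∀ s a, ∑ b, ((Matrix.of M) ^ s) a b = 1 := by
    intro s
    induction s with
    | zero => intro a; simp [Matrix.one_apply]
    | succ s ih =>
      intro a
      simp only [pow_succ, Matrix.mul_apply]
      rw [Finset.sum_comm]
      calc ∑ c, ∑ b, ((Matrix.of M) ^ s) a c * (Matrix.of M) c b
          = ∑ c, ((Matrix.of M) ^ s) a c * ∑ b, (Matrix.of M) c b := by
            apply Finset.sum_congr rfl
            intro c _
            rw [Finset.mul_sum]
        _ = 1 := by
            have : ∀ c, ∑ b, (Matrix.of M) c b = 1 := fun c => hM1 c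
            simp only [this, mul_one]
            exact ih a
  set ε : ℝ := min ((Finset.univ : Finset (L × L)).inf' Finset.univ_nonempty
    (fun p => ((Matrix.of M) ^ k) p.1 p.2)) (1/2) with hε
  have hε0 : 0 < ε := by
    apply lt_min _ (by norm_num)
    obtain ⟨p, _, hp⟩ := Finset.exists_mem_eq_inf' (Finset.univ_nonempty (α := L × L))
      (fun p => ((Matrix.of M) ^ k) p.1 p.2)
    rw [hp]
    exact hkpos p.1 p.2
  have hε12 : ε ≤ 1/2 := min_le_right _ _
  have hεentry : ∀ a b, ε ≤ ((Matrix.of M) ^ k) a b := fun a b =>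
    le_trans (min_le_left _ _) (Finset.inf'_le _ (Finset.mem_univ (a, b)))
  have h1ε0 : (0:ℝ) < 1 - ε := by linarith
  have h1ε1 : 1 - ε < 1 := by linarith
  refine ⟨(1 - ε) ^ ((k:ℝ)⁻¹), ⟨Real.rpow_pos_of_pos h1ε0 _,
    Real.rpow_lt_one h1ε0.le h1ε1 (by positivity)⟩, (1 - ε)⁻¹, by positivity, ?_⟩
  intro v hv hv0
  have hvt : ∀ s t a, v (t + s) a = ∑ b, ((Matrix.of M) ^ s) a b * v t b := by
    intro s
    induction s with
    | zero => intro t a; simp [Matrix.one_apply]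
    | succ s ih =>
      intro t a
      have : t + (s + 1) = (t + s) + 1 := by ring
      rw [this, hv]
      calc ∑ b, M a b * v (t + s) b = ∑ b, M a b * ∑ c, ((Matrix.of M) ^ s) b c * v t c := by
            apply Finset.sum_congr rfl
            intro b _
            rw [ih]
        _ = ∑ c, (∑ b, M a b * ((Matrix.of M) ^ s) b c) * v t c := by
            simp_rw [Finset.mul_sum]
            rw [Finset.sum_comm]
            apply Finset.sum_congr rfl
            intro c _
            rw [Finset.sum_mul]
            apply Finset.sum_congr rfl
            intro b _
            ring
        _ = ∑ c, ((Matrix.of M) ^ (s + 1)) a c * v t c := by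
            apply Finset.sum_congr rfl
            intro c _
            rw [pow_succ', Matrix.mul_apply]
            rfl
  have hbd : ∀ t b, 0 ≤ v t b ∧ v t b ≤ 1 := by
    intro t b
    have ht : v t b = ∑ c, ((Matrix.of M) ^ t) b c * v 0 c := by
      have := hvt t 0 b
      rwa [Nat.zero_add] at this
    constructor
    · rw [ht]
      exact Finset.sum_nonneg fun c _ => mul_nonneg (hpow0 t b c) (hv0 c).1
    · rw [ht]
      calc ∑ c, ((Matrix.of M) ^ t) b c * v 0 c ≤ ∑ c, ((Matrix.of M) ^ t) b c * 1 :=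
            Finset.sum_le_sum fun c _ => mul_le_mul_of_nonneg_left (hv0 c).2 (hpow0 t b c)
        _ = 1 := by simpa using hpow1 t b
  have hosc_step : ∀ t, osc (v (t + 1)) ≤ osc (v t) := by
    intro t
    have he : v (t + 1) = fun a => ∑ b, M a b * v t b := funext fun a => hv t a
    rw [he]
    have := osc_mul_le M hM1 0 le_rfl (fun a b => hM0 a b) (v t)
    simpa using this
  have hosc_mono : ∀ s t, s ≤ t → osc (v t) ≤ osc (v s) := by
    intro s t hst
    induction t with
    | zero => simp_all
    | succ t ih =>
      rcases Nat.lt_or_ge s (t + 1) with h | h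
      · exact le_trans (hosc_step t) (ih (Nat.lt_succ_iff.mp h))
      · have : s = t + 1 := le_antisymm hst h
        subst this
        exact le_rfl
  have hosc_k : ∀ t, osc (v (t + k)) ≤ (1 - ε) * osc (v t) := by
    intro t
    have he : v (t + k) = fun a => ∑ b, ((Matrix.of M) ^ k) a b * v t b :=
      funext fun a => hvt k t a
    rw [he]
    exact osc_mul_le _ (hpow1 k) ε hε0.le hεentry (v t)
  have hosc0 : osc (v 0) ≤ 1 := by
    have := osc_le_of_bounds (v 0) 0 1 (fun a => (hv0 a).1) (fun a => (hv0 a).2)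
    simpa using this
  have hosc_div : ∀ t, osc (v t) ≤ (1 - ε) ^ (t / k) := by
    intro t
    induction t using Nat.strong_induction_on with
    | _ t ih =>
      rcases Nat.lt_or_ge t k with h | h
      · rw [Nat.div_eq_of_lt h, pow_zero]
        exact le_trans (hosc_mono 0 t (Nat.zero_le t)) hosc0
      · have ht : t = (t - k) + k := (Nat.sub_add_cancel h).symm
        have h2 : osc (v t) ≤ (1 - ε) * osc (v (t - k)) := by
          have := hosc_k (t - k)
          rwa [Nat.sub_add_cancel h] at this
        have h3 : osc (v (t - k)) ≤ (1 - ε) ^ ((t - k) / k) :=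
          ih (t - k) (by omega)
        have h4 : t / k = (t - k) / k + 1 := by
          rw [Nat.div_eq_sub_div hk h]
        rw [h4, pow_succ]
        calc osc (v t) ≤ (1 - ε) * osc (v (t - k)) := h2
          _ ≤ (1 - ε) * (1 - ε) ^ ((t - k) / k) :=
              mul_le_mul_of_nonneg_left h3 h1ε0.le
          _ = (1 - ε) ^ ((t - k) / k) * (1 - ε) := by ring
  have hinv : ∀ t, ∑ b, q b * v t b = ∑ b, q b * v 0 b := by
    intro t
    induction t with
    | zero => rfl
    | succ t ih =>
      rw [← ih]
      calc ∑ b, q b * v (t + 1) b = ∑ b, q b * ∑ c, M b c * v t c := by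
            apply Finset.sum_congr rfl
            intro b _
            rw [hv]
        _ = ∑ c, (∑ b, q b * M b c) * v t c := by
            simp_rw [Finset.mul_sum]
            rw [Finset.sum_comm]
            apply Finset.sum_congr rfl
            intro c _
            rw [Finset.sum_mul]
            apply Finset.sum_congr rfl
            intro b _
            ring
        _ = ∑ c, q c * v t c := by
            apply Finset.sum_congr rfl
            intro c _
            rw [hqstat]
  intro t a
  have key : |v t a - ∑ b, q b * v 0 b| ≤ osc (v t) := by
    rw [← hinv t]
    have hexp : v t a - ∑ b, q b * v t b = ∑ b, q b * (v t a - v t b) := by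
      have h5 : ∑ b, q b * (v t a - v t b) = (∑ b, q b) * v t a - ∑ b, q b * v t b := by
        rw [Finset.sum_mul, ← Finset.sum_sub_distrib]
        apply Finset.sum_congr rfl
        intro b _
        ring
      rw [h5, hq1, one_mul]
    rw [hexp]
    calc |∑ b, q b * (v t a - v t b)| ≤ ∑ b, |q b * (v t a - v t b)| :=
          Finset.abs_sum_le_sum_abs _ _
      _ = ∑ b, q b * |v t a - v t b| := by
          apply Finset.sum_congr rfl
          intro b _
          rw [abs_mul, abs_of_nonneg (hq0 b)]
      _ ≤ ∑ b, q b * osc (v t) :=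
          Finset.sum_le_sum fun b _ =>
            mul_le_mul_of_nonneg_left (abs_sub_le_osc (v t) a b) (hq0 b)
      _ = osc (v t) := by rw [← Finset.sum_mul, hq1, one_mul]
  calc |v t a - ∑ b, q b * v 0 b| ≤ osc (v t) := key
    _ ≤ (1 - ε) ^ (t / k) := hosc_div t
    _ ≤ (1 - ε)⁻¹ * ((1 - ε) ^ ((k:ℝ)⁻¹)) ^ t := geom_div_le ε hε0 hε12 k hk t

end DoeblinMain

section Helpers

variable (A : Fin n → Type*) [∀ i, Fintype (A i)]

lemma marg_eval_congr {V W : Finset (Fin n)} (e : V = W)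
    (hV : V ⊆ Finset.univ) (hW : W ⊆ Finset.univ) (ν : Cfg A Finset.univ → ℝ)
    {U : Finset (Fin n)} (hVU : V ⊆ U) (hWU : W ⊆ U) (x : Cfg A U) :
    marg A hV ν (res A hVU x) = marg A hW ν (res A hWU x) := by
  subst e
  rfl

lemma avg01 {L : Type*} [Fintype L] (c w : L → ℝ) (hc0 : ∀ b, 0 ≤ c b) (hc1 : ∑ b, c b = 1)
    (hw : ∀ b, 0 ≤ w b ∧ w b ≤ 1) : 0 ≤ ∑ b, c b * w b ∧ ∑ b, c b * w b ≤ 1 := by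
  constructor
  · exact Finset.sum_nonneg fun b _ => mul_nonneg (hc0 b) (hw b).1
  · calc ∑ b, c b * w b ≤ ∑ b, c b * 1 :=
        Finset.sum_le_sum fun b _ => mul_le_mul_of_nonneg_left (hw b).2 (hc0 b)
      _ = 1 := by simp only [mul_one]; exact hc1

lemma abs_prod_sub_prod {ι : Type*} (s : Finset ι) (f g : ι → ℝ)
    (hf : ∀ i ∈ s, 0 ≤ f i ∧ f i ≤ 1) (hg : ∀ i ∈ s, 0 ≤ g i ∧ g i ≤ 1) :
    |∏ i ∈ s, f i - ∏ i ∈ s, g i| ≤ ∑ i ∈ s, |f i - g i| := by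
  classical
  induction s using Finset.induction_on with
  | empty => simp
  | insert _ _ ha ih =>
    rename_i a s'
    rw [Finset.prod_insert ha, Finset.prod_insert ha, Finset.sum_insert ha]
    have hfa := hf a (Finset.mem_insert_self a s')
    have hga := hg a (Finset.mem_insert_self a s')
    have hf' : ∀ i ∈ s', 0 ≤ f i ∧ f i ≤ 1 := fun i hi => hf i (Finset.mem_insert_of_mem hi)
    have hg' : ∀ i ∈ s', 0 ≤ g i ∧ g i ≤ 1 := fun i hi => hg i (Finset.mem_insert_of_mem hi)
    have ihs := ih hf' hg'
    have hgp0 : 0 ≤ ∏ i ∈ s', g i := Finset.prod_nonneg fun i hi => (hg' i hi).1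
    have hgp1 : ∏ i ∈ s', g i ≤ 1 := Finset.prod_le_one (fun i hi => (hg' i hi).1)
      (fun i hi => (hg' i hi).2)
    have key : f a * ∏ i ∈ s', f i - g a * ∏ i ∈ s', g i
        = f a * (∏ i ∈ s', f i - ∏ i ∈ s', g i) + (f a - g a) * ∏ i ∈ s', g i := by ring
    rw [key]
    calc |f a * (∏ i ∈ s', f i - ∏ i ∈ s', g i) + (f a - g a) * ∏ i ∈ s', g i|
        ≤ |f a * (∏ i ∈ s', f i - ∏ i ∈ s', g i)| + |(f a - g a) * ∏ i ∈ s', g i| :=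
          abs_add_le _ _
      _ ≤ 1 * |∏ i ∈ s', f i - ∏ i ∈ s', g i| + |f a - g a| * 1 := by
          rw [abs_mul, abs_mul]
          apply add_le_add
          · exact mul_le_mul_of_nonneg_right (by rw [abs_of_nonneg hfa.1]; exact hfa.2)
              (abs_nonneg _)
          · exact mul_le_mul_of_nonneg_left (by rw [abs_of_nonneg hgp0]; exact hgp1)
              (abs_nonneg _)
      _ ≤ |f a - g a| + ∑ i ∈ s', |f i - g i| := by
          rw [one_mul, mul_one]
          linarith

end Helpers

section PiU

variable (A : Fin n → Type*) [∀ i, Fintype (A i)] {L : Type*} [Fintype L]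

noncomputable def piU (q : L → ℝ) (ν0 : L → Cfg A Finset.univ → ℝ) (U : Finset (Fin n))
    (x : Cfg A U) : ℝ :=
  ∏ i ∈ U.attach, ∑ β, q β * marg A (Finset.subset_univ {i.1}) (ν0 β)
    (res A (Finset.singleton_subset_iff.mpr i.2) x)

lemma piU_empty (q : L → ℝ) (ν0 : L → Cfg A Finset.univ → ℝ)
    (x : Cfg A (∅ : Finset (Fin n))) : piU A q ν0 ∅ x = 1 := by
  simp [piU]

lemma piU_bounds (q : L → ℝ) (hq0 : ∀ b, 0 ≤ q b) (hq1 : ∑ b, q b = 1)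
    (ν0 : L → Cfg A Finset.univ → ℝ) (hν0 : ∀ β, (∀ y, 0 ≤ ν0 β y) ∧ ∑ y, ν0 β y = 1)
    (U : Finset (Fin n)) (x : Cfg A U) : 0 ≤ piU A q ν0 U x ∧ piU A q ν0 U x ≤ 1 := by
  have hfac : ∀ i ∈ U.attach, 0 ≤ (∑ β, q β * marg A (Finset.subset_univ {i.1}) (ν0 β)
      (res A (Finset.singleton_subset_iff.mpr i.2) x)) ∧
      (∑ β, q β * marg A (Finset.subset_univ {i.1}) (ν0 β)
      (res A (Finset.singleton_subset_iff.mpr i.2) x)) ≤ 1 := by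
    intro i _
    apply avg01 q _ hq0 hq1
    intro β
    constructor
    · exact marg_nonneg A _ _ (hν0 β).1 _
    · rw [← (hν0 β).2]
      exact marg_le_mass A _ _ (hν0 β).1 _
  constructor
  · exact Finset.prod_nonneg fun i hi => (hfac i hi).1
  · exact Finset.prod_le_one (fun i hi => (hfac i hi).1) (fun i hi => (hfac i hi).2)

lemma piU_univ (q : L → ℝ) (ν0 : L → Cfg A Finset.univ → ℝ)
    (x : Cfg A (Finset.univ : Finset (Fin n))) :
    piU A q ν0 Finset.univ x = ∏ i : Fin n, ∑ β, q β *
      marg A (Finset.subset_univ {i}) (ν0 β) (res A (Finset.subset_univ {i}) x) := by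
  exact Finset.prod_attach Finset.univ fun i => ∑ β, q β *
    marg A (Finset.subset_univ {i}) (ν0 β) (res A (Finset.subset_univ {i}) x)

lemma piU_singleton (q : L → ℝ) (ν0 : L → Cfg A Finset.univ → ℝ) (i : Fin n)
    (x : Cfg A ({i} : Finset (Fin n))) :
    piU A q ν0 {i} x = ∑ β, q β * marg A (Finset.subset_univ {i}) (ν0 β) x := by
  unfold piU
  have h1 : ({i} : Finset (Fin n)).attach = {⟨i, Finset.mem_singleton_self i⟩} := by
    ext j
    simp [Subtype.ext_iff, Finset.mem_singleton.mp j.2]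
  rw [h1, Finset.prod_singleton]
  rfl

lemma piU_prod (q : L → ℝ) (ν0 : L → Cfg A Finset.univ → ℝ)
    {P : Finset (Finset (Fin n))}
    (hdisj : ∀ b ∈ P, ∀ c ∈ P, b ≠ c → Disjoint b c)
    (hsup : P.sup id = (Finset.univ : Finset (Fin n)))
    (U : Finset (Fin n)) (x : Cfg A U) :
    ∏ d ∈ P, piU A q ν0 (d ∩ U) (res A (Finset.inter_subset_right : d ∩ U ⊆ U) x)
      = piU A q ν0 U x := by
  classical
  set G : Fin n → ℝ := fun i => if h : i ∈ U then ∑ β, q β *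
    marg A (Finset.subset_univ {i}) (ν0 β)
      (res A (Finset.singleton_subset_iff.mpr h) x) else 1 with hG
  have hblock : ∀ d : Finset (Fin n),
      piU A q ν0 (d ∩ U) (res A (Finset.inter_subset_right : d ∩ U ⊆ U) x)
        = ∏ i ∈ d ∩ U, G i := by
    intro d
    rw [← Finset.prod_attach (d ∩ U) G]
    apply Finset.prod_congr rfl
    intro i _
    have hiU : i.1 ∈ U := (Finset.mem_inter.mp i.2).2
    rw [hG]
    simp only [dif_pos hiU]
    rfl
  have hUeq : piU A q ν0 U x = ∏ i ∈ U, G i := by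
    rw [← Finset.prod_attach U G]
    apply Finset.prod_congr rfl
    intro i _
    rw [hG]
    simp only [dif_pos i.2]
  rw [hUeq, Finset.prod_congr rfl (fun d _ => hblock d)]
  have hdisj' : (↑P : Set (Finset (Fin n))).PairwiseDisjoint (fun d => d ∩ U) := by
    intro a ha b hb hab
    exact Finset.disjoint_left.mpr fun i hia hib =>
      Finset.disjoint_left.mp (hdisj a ha b hb hab)
        (Finset.mem_inter.mp hia).1 (Finset.mem_inter.mp hib).1
  rw [← Finset.prod_biUnion hdisj']
  congr 1
  ext i
  simp only [Finset.mem_biUnion, Finset.mem_inter]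
  constructor
  · rintro ⟨d, _, _, hiU⟩
    exact hiU
  · intro hiU
    have : i ∈ P.sup id := hsup ▸ Finset.mem_univ i
    rw [Finset.mem_sup] at this
    obtain ⟨d, hd, hid⟩ := this
    exact ⟨d, hd, hid, hiU⟩

end PiU

section MuProb

variable (A : Fin n → Type*) [∀ i, Fintype (A i)] {L : Type*} [Fintype L]

noncomputable def emptyCfg : Cfg A (∅ : Finset (Fin n)) :=
  fun i => absurd i.2 (Finset.notMem_empty i.1)

lemma mass_eq_marg_empty (ν : Cfg A Finset.univ → ℝ) :
    ∑ y, ν y = marg A (Finset.subset_univ ∅) ν (emptyCfg A) :=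
  (marg_empty A _ ν _).symm

lemma mu_prob (M : L → L → ℝ) (hM0 : ∀ a b, 0 ≤ M a b) (hM1 : ∀ a, ∑ b, M a b = 1)
    (r : Finset (Finset (Fin n)) → ℝ) (hr0 : ∀ P, 0 ≤ r P)
    (hr1 : ∑ P ∈ partitionsOf (Finset.univ : Finset (Fin n)), r P = 1)
    (μ : ℕ → L → Cfg A Finset.univ → ℝ)
    (h0 : ∀ β, (∀ x, 0 ≤ μ 0 β x) ∧ ∑ x, μ 0 β x = 1)
    (hrec : ∀ t α x, μ (t+1) α x = MREstep A M r (μ t) α x) :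
    ∀ t β, (∀ x, 0 ≤ μ t β x) ∧ ∑ x, μ t β x = 1 := by
  intro t
  induction t with
  | zero => exact h0
  | succ t ih =>
    intro β
    constructor
    · intro x
      rw [hrec]
      unfold MREstep
      apply Finset.sum_nonneg
      intro P _
      apply mul_nonneg (hr0 P)
      apply Finset.prod_nonneg
      intro d _
      apply Finset.sum_nonneg
      intro c _
      exact mul_nonneg (hM0 β c) (marg_nonneg A _ _ (fun y => (ih c).1 y) _)
    · have hfun : μ (t+1) β = MREstep A M r (μ t) β := funext fun x => hrec t β x
      calc ∑ x, μ (t+1) β x = marg A (Finset.subset_univ ∅) (μ (t+1) β) (emptyCfg A) :=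
            mass_eq_marg_empty A _
        _ = marg A (Finset.subset_univ ∅) (MREstep A M r (μ t) β) (emptyCfg A) := by
            rw [hfun]
        _ = ∑ P ∈ partitionsOf (Finset.univ : Finset (Fin n)), r P *
            ∏ d ∈ P, ∑ c, M β c * marg A (Finset.subset_univ (d ∩ ∅)) (μ t c)
              (res A (Finset.inter_subset_right : d ∩ ∅ ⊆ ∅) (emptyCfg A)) :=
            MREstep_marg A M r (μ t) β ∅ (emptyCfg A)
        _ = ∑ P ∈ partitionsOf (Finset.univ : Finset (Fin n)), r P * ∏ d ∈ P, (1:ℝ) := by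
            apply Finset.sum_congr rfl
            intro P _
            congr 1
            apply Finset.prod_congr rfl
            intro d _
            have e : d ∩ (∅ : Finset (Fin n)) = ∅ := Finset.inter_empty d
            have hm : ∀ c, marg A (Finset.subset_univ (d ∩ ∅)) (μ t c)
                (res A (Finset.inter_subset_right : d ∩ ∅ ⊆ ∅) (emptyCfg A)) = 1 := by
              intro c
              rw [marg_eval_congr A e (Finset.subset_univ _) (Finset.subset_univ _) (μ t c)
                Finset.inter_subset_right (Finset.Subset.refl ∅) (emptyCfg A)]
              rw [marg_empty]
              exact (ih c).2
            calc ∑ c, M β c * marg A (Finset.subset_univ (d ∩ ∅)) (μ t c)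
                  (res A (Finset.inter_subset_right : d ∩ ∅ ⊆ ∅) (emptyCfg A))
                = ∑ c, M β c := by
                  apply Finset.sum_congr rfl
                  intro c _
                  rw [hm c, mul_one]
              _ = 1 := hM1 β
        _ = 1 := by simpa using hr1

end MuProb

section ProdBad

variable (A : Fin n → Type*) [∀ i, Fintype (A i)] {L : Type*} [Fintype L]

lemma prod_bad (M : L → L → ℝ) (hM1 : ∀ a, ∑ b, M a b = 1)
    (μ : L → Cfg A Finset.univ → ℝ) (hmass : ∀ β, ∑ y, μ β y = 1) (α : L)
    {P : Finset (Finset (Fin n))}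
    (hdisj : ∀ b ∈ P, ∀ c ∈ P, b ≠ c → Disjoint b c)
    {U : Finset (Fin n)} (hUne : U.Nonempty) {d0 : Finset (Fin n)} (hd0 : d0 ∈ P)
    (hUd0 : U ⊆ d0) (x : Cfg A U) :
    ∏ d ∈ P, (∑ β, M α β * marg A (Finset.subset_univ (d ∩ U)) (μ β)
        (res A (Finset.inter_subset_right : d ∩ U ⊆ U) x))
    = ∑ β, M α β * marg A (Finset.subset_univ U) (μ β) x := by
  rw [← Finset.mul_prod_erase P _ hd0]
  have e0 : d0 ∩ U = U := Finset.inter_eq_right.mpr hUd0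
  have h1 : (∑ β, M α β * marg A (Finset.subset_univ (d0 ∩ U)) (μ β)
      (res A (Finset.inter_subset_right : d0 ∩ U ⊆ U) x))
      = ∑ β, M α β * marg A (Finset.subset_univ U) (μ β) x := by
    apply Finset.sum_congr rfl
    intro β _
    congr 1
    rw [marg_eval_congr A e0 (Finset.subset_univ _) (Finset.subset_univ _) (μ β)
      Finset.inter_subset_right (Finset.Subset.refl U) x]
    rw [res_self]
  have h2 : ∏ d ∈ P.erase d0, (∑ β, M α β * marg A (Finset.subset_univ (d ∩ U)) (μ β)
      (res A (Finset.inter_subset_right : d ∩ U ⊆ U) x)) = 1 := by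
    apply Finset.prod_eq_one
    intro d hd
    have hdP : d ∈ P := Finset.mem_of_mem_erase hd
    have hdne : d ≠ d0 := Finset.ne_of_mem_erase hd
    have e : d ∩ U = ∅ := by
      rw [Finset.eq_empty_iff_forall_notMem]
      intro i hi
      obtain ⟨hid, hiU⟩ := Finset.mem_inter.mp hi
      exact Finset.disjoint_left.mp (hdisj d hdP d0 hd0 hdne) hid (hUd0 hiU)
    have hm : ∀ β, marg A (Finset.subset_univ (d ∩ U)) (μ β)
        (res A (Finset.inter_subset_right : d ∩ U ⊆ U) x) = 1 := by
      intro β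
      rw [marg_eval_congr A e (Finset.subset_univ _) (Finset.subset_univ _) (μ β)
        Finset.inter_subset_right (Finset.empty_subset U) x]
      rw [marg_empty]
      exact hmass β
    calc ∑ β, M α β * marg A (Finset.subset_univ (d ∩ U)) (μ β)
          (res A (Finset.inter_subset_right : d ∩ U ⊆ U) x)
        = ∑ β, M α β := by
          apply Finset.sum_congr rfl
          intro β _
          rw [hm β, mul_one]
      _ = 1 := hM1 α
  rw [h1, h2, mul_one]

end ProdBad

section MainInd

variable (A : Fin n → Type*) [∀ i, Fintype (A i)] {L : Type*} [Fintype L]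

lemma main_ind (M : L → L → ℝ) (hM0 : ∀ a b, 0 ≤ M a b) (hM1 : ∀ a, ∑ b, M a b = 1)
    (q : L → ℝ) (hq0 : ∀ a, 0 ≤ q a) (hq1 : ∑ a, q a = 1)
    (r : Finset (Finset (Fin n)) → ℝ) (hr0 : ∀ P, 0 ≤ r P)
    (hr1 : ∑ P ∈ partitionsOf (Finset.univ : Finset (Fin n)), r P = 1)
    (γ : ℝ) (hγ0 : 0 < γ) (hγ1 : γ < 1)
    (CD : ℝ) (hCD : 0 < CD)
    (hdoeb : ∀ v : ℕ → L → ℝ, (∀ t a, v (t+1) a = ∑ b, M a b * v t b) →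
      (∀ b, 0 ≤ v 0 b ∧ v 0 b ≤ 1) → ∀ t a, |v t a - ∑ b, q b * v 0 b| ≤ CD * γ ^ t)
    (ρ : ℝ) (hρ0 : 0 ≤ ρ) (hργ : ρ < γ)
    (hbad : ∀ U : Finset (Fin n), 2 ≤ U.card →
      ∑ P ∈ (partitionsOf (Finset.univ : Finset (Fin n))).filter
          (fun P => ∃ d ∈ P, U ⊆ d), r P ≤ ρ) :
    ∀ m : ℕ, ∃ C > (0:ℝ), ∀ μ : ℕ → L → Cfg A Finset.univ → ℝ,
      (∀ β, (∀ x, 0 ≤ μ 0 β x) ∧ ∑ x, μ 0 β x = 1) →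
      (∀ t α x, μ (t+1) α x = MREstep A M r (μ t) α x) →
      ∀ U : Finset (Fin n), U.card ≤ m → ∀ t α (x : Cfg A U),
        |marg A (Finset.subset_univ U) (μ t α) x - piU A q (μ 0) U x| ≤ C * γ ^ t := by
  intro m
  induction m with
  | zero =>
    refine ⟨1, one_pos, ?_⟩
    intro μ h0 hrec U hU t α x
    have hUe : U = ∅ := Finset.card_eq_zero.mp (Nat.le_zero.mp hU)
    subst hUe
    have hprob := mu_prob A M hM0 hM1 r hr0 hr1 μ h0 hrec
    have h1 : marg A (Finset.subset_univ ∅) (μ t α) x = 1 := by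
      rw [marg_empty]
      exact (hprob t α).2
    rw [h1, piU_empty]
    simp only [sub_self, abs_zero, one_mul]
    positivity
  | succ m ihm =>
    obtain ⟨C, hCpos, hC⟩ := ihm
    set D : ℝ := (2^n : ℝ) * C with hD
    have hDpos : 0 < D := by positivity
    set CU : ℝ := max 2 (D / (γ - ρ)) with hCU
    have hCU2 : (2:ℝ) ≤ CU := le_max_left _ _
    have hCUD : D / (γ - ρ) ≤ CU := le_max_right _ _
    have hCUpos : 0 < CU := lt_of_lt_of_le two_pos hCU2
    refine ⟨max C (max CD CU), lt_of_lt_of_le hCpos (le_max_left _ _), ?_⟩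
    intro μ h0 hrec U hU t α x
    have hγt : (0:ℝ) ≤ γ ^ t := pow_nonneg hγ0.le t
    have hprob := mu_prob A M hM0 hM1 r hr0 hr1 μ h0 hrec
    have hmarg01 : ∀ (s : ℕ) (β : L) (V : Finset (Fin n)) (y : Cfg A V),
        0 ≤ marg A (Finset.subset_univ V) (μ s β) y ∧
        marg A (Finset.subset_univ V) (μ s β) y ≤ 1 := by
      intro s β V y
      constructor
      · exact marg_nonneg A _ _ (hprob s β).1 y
      · rw [← (hprob s β).2]
        exact marg_le_mass A _ _ (hprob s β).1 y
    by_cases hcard : U.card ≤ m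
    · refine le_trans (hC μ h0 hrec U hcard t α x) ?_
      exact mul_le_mul_of_nonneg_right (le_max_left _ _) hγt
    · have hcard1 : U.card = m + 1 := le_antisymm hU (Nat.not_le.mp hcard)
      rcases Nat.eq_zero_or_pos m with hm0 | hm1
      · -- singleton case
        subst hm0
        obtain ⟨i, hUi⟩ := Finset.card_eq_one.mp hcard1
        subst hUi
        set v : ℕ → L → ℝ := fun s β => marg A (Finset.subset_univ {i}) (μ s β) x with hv
        have hvrec : ∀ s a, v (s+1) a = ∑ b, M a b * v s b := by
          intro s a
          have hfun : μ (s+1) a = MREstep A M r (μ s) a := funext fun y => hrec s a y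
          show marg A (Finset.subset_univ {i}) (μ (s+1) a) x = _
          rw [hfun, MREstep_marg A M r (μ s) a {i} x]
          have hall : ∀ P ∈ partitionsOf (Finset.univ : Finset (Fin n)),
              (∏ d ∈ P, ∑ b, M a b * marg A (Finset.subset_univ (d ∩ {i})) (μ s b)
                (res A (Finset.inter_subset_right : d ∩ {i} ⊆ {i}) x))
              = ∑ b, M a b * v s b := by
            intro P hP
            obtain ⟨hne, hdisj, hsup⟩ : IsPartition Finset.univ P := by
              simpa [partitionsOf] using hP
            have hi : i ∈ P.sup id := hsup ▸ Finset.mem_univ i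
            rw [Finset.mem_sup] at hi
            obtain ⟨d0, hd0, hid0⟩ := hi
            exact prod_bad A M hM1 (μ s) (fun β => (hprob s β).2) a hdisj
              ⟨i, Finset.mem_singleton_self i⟩ hd0
              (Finset.singleton_subset_iff.mpr hid0) x
          rw [Finset.sum_congr rfl fun P hP => by rw [hall P hP]]
          rw [← Finset.sum_mul, hr1, one_mul]
        have hv0 : ∀ b, 0 ≤ v 0 b ∧ v 0 b ≤ 1 := fun b => hmarg01 0 b {i} x
        have hlim : piU A q (μ 0) {i} x = ∑ b, q b * v 0 b := piU_singleton A q (μ 0) i x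
        rw [hlim]
        refine le_trans (hdoeb v hvrec hv0 t α) ?_
        exact mul_le_mul_of_nonneg_right (le_trans (le_max_left _ _) (le_max_right _ _)) hγt
      · -- card U ≥ 2 case
        have h2card : 2 ≤ U.card := by omega
        have hUne : U.Nonempty := Finset.card_pos.mp (by omega)
        have hπ01 := piU_bounds A q hq0 hq1 (μ 0) h0 U
        have claim : ∀ s α (x : Cfg A U),
            |marg A (Finset.subset_univ U) (μ s α) x - piU A q (μ 0) U x| ≤ CU * γ ^ s := by
          intro s
          induction s with
          | zero =>
            intro α x
            rw [pow_zero, mul_one]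
            have h1 := hmarg01 0 α U x
            have h2 := hπ01 x
            rw [abs_sub_le_iff]
            constructor <;> linarith [h1.1, h1.2, h2.1, h2.2, hCU2]
          | succ s ihs =>
            intro α x
            have hγs : (0:ℝ) ≤ γ ^ s := pow_nonneg hγ0.le s
            set π : ℝ := piU A q (μ 0) U x with hπ
            set g : Finset (Finset (Fin n)) → ℝ := fun P =>
              ∏ d ∈ P, ∑ b, M α b * marg A (Finset.subset_univ (d ∩ U)) (μ s b)
                (res A (Finset.inter_subset_right : d ∩ U ⊆ U) x) with hg
            have hrw : marg A (Finset.subset_univ U) (μ (s+1) α) x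
                = ∑ P ∈ partitionsOf (Finset.univ : Finset (Fin n)), r P * g P := by
              have hfun : μ (s+1) α = MREstep A M r (μ s) α := funext fun y => hrec s α y
              rw [hfun]
              exact MREstep_marg A M r (μ s) α U x
            have hπs : π = ∑ P ∈ partitionsOf (Finset.univ : Finset (Fin n)), r P * π := by
              rw [← Finset.sum_mul, hr1, one_mul]
            have hdiff : marg A (Finset.subset_univ U) (μ (s+1) α) x - π
                = ∑ P ∈ partitionsOf (Finset.univ : Finset (Fin n)), r P * (g P - π) := by
              rw [hrw]
              nth_rewrite 1 [hπs]
              rw [← Finset.sum_sub_distrib]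
              apply Finset.sum_congr rfl
              intro P _
              ring
            rw [hdiff]
            -- bad/good split
            set S := partitionsOf (Finset.univ : Finset (Fin n)) with hS
            set bad : Finset (Finset (Fin n)) → Prop := fun P => ∃ d ∈ P, U ⊆ d with hbaddef
            have habs : |∑ P ∈ S, r P * (g P - π)| ≤ ∑ P ∈ S, r P * |g P - π| := by
              refine le_trans (Finset.abs_sum_le_sum_abs _ _) ?_
              apply Finset.sum_le_sum
              intro P _
              rw [abs_mul, abs_of_nonneg (hr0 P)]
            refine le_trans habs ?_
            rw [← Finset.sum_filter_add_sum_filter_not S bad (fun P => r P * |g P - π|)]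
            have hbadbound : ∑ P ∈ S.filter bad, r P * |g P - π| ≤ ρ * (CU * γ ^ s) := by
              have hperP : ∀ P ∈ S.filter bad, r P * |g P - π| ≤ r P * (CU * γ ^ s) := by
                intro P hP
                obtain ⟨hPS, hPbad⟩ := Finset.mem_filter.mp hP
                obtain ⟨hne, hdisj, hsup⟩ : IsPartition Finset.univ P := by
                  simpa [partitionsOf, hS] using hPS
                obtain ⟨d0, hd0, hUd0⟩ := hPbad
                have hgP : g P = ∑ b, M α b * marg A (Finset.subset_univ U) (μ s b) x :=
                  prod_bad A M hM1 (μ s) (fun β => (hprob s β).2) α hdisj hUne hd0 hUd0 x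
                apply mul_le_mul_of_nonneg_left _ (hr0 P)
                rw [hgP]
                have hπavg : π = ∑ b, M α b * π := by rw [← Finset.sum_mul, hM1, one_mul]
                have : (∑ b, M α b * marg A (Finset.subset_univ U) (μ s b) x) - π
                    = ∑ b, M α b * (marg A (Finset.subset_univ U) (μ s b) x - π) := by
                  nth_rewrite 1 [hπavg]
                  rw [← Finset.sum_sub_distrib]
                  apply Finset.sum_congr rfl
                  intro b _
                  ring
                rw [this]
                refine le_trans (Finset.abs_sum_le_sum_abs _ _) ?_
                calc ∑ b, |M α b * (marg A (Finset.subset_univ U) (μ s b) x - π)|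
                    = ∑ b, M α b * |marg A (Finset.subset_univ U) (μ s b) x - π| := by
                      apply Finset.sum_congr rfl
                      intro b _
                      rw [abs_mul, abs_of_nonneg (hM0 α b)]
                  _ ≤ ∑ b, M α b * (CU * γ ^ s) :=
                      Finset.sum_le_sum fun b _ =>
                        mul_le_mul_of_nonneg_left (ihs b x) (hM0 α b)
                  _ = CU * γ ^ s := by rw [← Finset.sum_mul, hM1, one_mul]
              refine le_trans (Finset.sum_le_sum hperP) ?_
              rw [← Finset.sum_mul]
              exact mul_le_mul_of_nonneg_right (hbad U h2card) (by positivity)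
            have hgoodbound : ∑ P ∈ S.filter (fun P => ¬ bad P), r P * |g P - π|
                ≤ D * γ ^ s := by
              have hperP : ∀ P ∈ S.filter (fun P => ¬ bad P),
                  r P * |g P - π| ≤ r P * (D * γ ^ s) := by
                intro P hP
                obtain ⟨hPS, hPgood⟩ := Finset.mem_filter.mp hP
                obtain ⟨hne, hdisj, hsup⟩ : IsPartition Finset.univ P := by
                  simpa [partitionsOf, hS] using hPS
                apply mul_le_mul_of_nonneg_left _ (hr0 P)
                have hπprod : π = ∏ d ∈ P, piU A q (μ 0) (d ∩ U)
                    (res A (Finset.inter_subset_right : d ∩ U ⊆ U) x) :=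
                  (piU_prod A q (μ 0) hdisj hsup U x).symm
                rw [hπprod, hg]
                have hfb : ∀ d ∈ P, 0 ≤ (∑ b, M α b * marg A (Finset.subset_univ (d ∩ U))
                    (μ s b) (res A (Finset.inter_subset_right : d ∩ U ⊆ U) x)) ∧
                    (∑ b, M α b * marg A (Finset.subset_univ (d ∩ U)) (μ s b)
                    (res A (Finset.inter_subset_right : d ∩ U ⊆ U) x)) ≤ 1 := by
                  intro d _
                  exact avg01 (M α) _ (hM0 α) (hM1 α) fun b => hmarg01 s b (d ∩ U) _
                have hgb : ∀ d ∈ P, 0 ≤ piU A q (μ 0) (d ∩ U)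
                    (res A (Finset.inter_subset_right : d ∩ U ⊆ U) x) ∧
                    piU A q (μ 0) (d ∩ U)
                    (res A (Finset.inter_subset_right : d ∩ U ⊆ U) x) ≤ 1 :=
                  fun d _ => piU_bounds A q hq0 hq1 (μ 0) h0 (d ∩ U) _
                refine le_trans (abs_prod_sub_prod P _ _ hfb hgb) ?_
                have hper_d : ∀ d ∈ P, |(∑ b, M α b * marg A (Finset.subset_univ (d ∩ U))
                    (μ s b) (res A (Finset.inter_subset_right : d ∩ U ⊆ U) x))
                    - piU A q (μ 0) (d ∩ U)
                      (res A (Finset.inter_subset_right : d ∩ U ⊆ U) x)| ≤ C * γ ^ s := by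
                  intro d hd
                  have hcard_d : (d ∩ U).card ≤ m := by
                    have hne_inter : d ∩ U ≠ U := by
                      intro he
                      exact hPgood ⟨d, hd, by rw [← he]; exact Finset.inter_subset_left⟩
                    have hss : d ∩ U ⊂ U :=
                      (Finset.ssubset_iff_subset_ne).mpr ⟨Finset.inter_subset_right, hne_inter⟩
                    have := Finset.card_lt_card hss
                    omega
                  set w : ℝ := piU A q (μ 0) (d ∩ U)
                    (res A (Finset.inter_subset_right : d ∩ U ⊆ U) x) with hw
                  have hwavg : w = ∑ b, M α b * w := by rw [← Finset.sum_mul, hM1, one_mul]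
                  have hre : (∑ b, M α b * marg A (Finset.subset_univ (d ∩ U)) (μ s b)
                      (res A (Finset.inter_subset_right : d ∩ U ⊆ U) x)) - w
                      = ∑ b, M α b * (marg A (Finset.subset_univ (d ∩ U)) (μ s b)
                      (res A (Finset.inter_subset_right : d ∩ U ⊆ U) x) - w) := by
                    nth_rewrite 1 [hwavg]
                    rw [← Finset.sum_sub_distrib]
                    apply Finset.sum_congr rfl
                    intro b _
                    ring
                  rw [hre]
                  refine le_trans (Finset.abs_sum_le_sum_abs _ _) ?_
                  calc ∑ b, |M α b * (marg A (Finset.subset_univ (d ∩ U)) (μ s b)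
                        (res A (Finset.inter_subset_right : d ∩ U ⊆ U) x) - w)|
                      = ∑ b, M α b * |marg A (Finset.subset_univ (d ∩ U)) (μ s b)
                        (res A (Finset.inter_subset_right : d ∩ U ⊆ U) x) - w| := by
                        apply Finset.sum_congr rfl
                        intro b _
                        rw [abs_mul, abs_of_nonneg (hM0 α b)]
                    _ ≤ ∑ b, M α b * (C * γ ^ s) :=
                        Finset.sum_le_sum fun b _ => mul_le_mul_of_nonneg_left
                          (hC μ h0 hrec (d ∩ U) hcard_d s b _) (hM0 α b)
                    _ = C * γ ^ s := by rw [← Finset.sum_mul, hM1, one_mul]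
                refine le_trans (Finset.sum_le_sum hper_d) ?_
                rw [Finset.sum_const, nsmul_eq_mul]
                have hPcard : (P.card : ℝ) ≤ (2^n : ℝ) := by
                  have h1 : P.card ≤ Fintype.card (Finset (Fin n)) := Finset.card_le_univ P
                  have h2 : Fintype.card (Finset (Fin n)) = 2 ^ n := by
                    rw [Fintype.card_finset, Fintype.card_fin]
                  rw [h2] at h1
                  exact_mod_cast h1
                calc (P.card : ℝ) * (C * γ ^ s) ≤ (2^n : ℝ) * (C * γ ^ s) :=
                      mul_le_mul_of_nonneg_right hPcard (by positivity)
                  _ = D * γ ^ s := by rw [hD]; ring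
              refine le_trans (Finset.sum_le_sum hperP) ?_
              rw [← Finset.sum_mul]
              have hsum1 : ∑ P ∈ S.filter (fun P => ¬ bad P), r P ≤ 1 := by
                rw [← hr1]
                exact Finset.sum_le_sum_of_subset_of_nonneg (Finset.filter_subset _ _)
                  (fun P hP _ => hr0 P)
              nlinarith [mul_nonneg hDpos.le hγs]
            have hfinal : ρ * (CU * γ ^ s) + D * γ ^ s ≤ CU * γ ^ (s + 1) := by
              have hDle : D ≤ CU * (γ - ρ) := by
                rw [div_le_iff₀ (by linarith : (0:ℝ) < γ - ρ)] at hCUD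
                linarith
              have : γ ^ (s+1) = γ * γ ^ s := by rw [pow_succ]; ring
              rw [this]
              nlinarith [hγs, hCUpos]
            linarith
        refine le_trans (claim t α x) ?_
        exact mul_le_mul_of_nonneg_right
          (le_trans (le_max_right _ _) (le_max_right _ _)) hγt

end MainInd

/-- asymptotics of the MRE.  Under primitivity of `M` (with stationary
distribution `q`) and the assumption that the coarsest common refinement of the partitions with
positive recombination probability is the singleton partition, the solution of the MRE converges
to `μ_∞(α) = ⊗_{i=1}^n μ_∞^{{i}}(α)` with `μ_∞^{{i}}(α) = ∑_β q(β) μ_0^{{i}}(β)` (independent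
of `α`), at a geometric rate that is uniform in `μ_0`. -/
theorem MRE_asymptotics (A : Fin n → Type*) [∀ i, Fintype (A i)]
    {L : Type*} [Fintype L] [DecidableEq L]
    (M : L → L → ℝ) (hM0 : ∀ α β, 0 ≤ M α β) (hM1 : ∀ α, ∑ β, M α β = 1)
    (hprim : ∃ k : ℕ, 0 < k ∧ ∀ α β, 0 < ((Matrix.of M) ^ k) α β)
    (q : L → ℝ) (hq0 : ∀ α, 0 ≤ q α) (hq1 : ∑ α, q α = 1)
    (hqstat : ∀ β, ∑ α, q α * M α β = q β)
    (r : Finset (Finset (Fin n)) → ℝ) (hr0 : ∀ P, 0 ≤ r P)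
    (hr1 : ∑ P ∈ partitionsOf (Finset.univ : Finset (Fin n)), r P = 1)
    (hsep : ∀ i j : Fin n, i ≠ j → ∃ P ∈ partitionsOf (Finset.univ : Finset (Fin n)),
      0 < r P ∧ ∀ d ∈ P, ¬(i ∈ d ∧ j ∈ d)) :
    ∃ γ ∈ Set.Ioo (0 : ℝ) 1, ∃ C > (0 : ℝ),
      ∀ μ : ℕ → L → Cfg A Finset.univ → ℝ,
        (∀ β, (∀ x, 0 ≤ μ 0 β x) ∧ ∑ x, μ 0 β x = 1) →
        (∀ t α x, μ (t + 1) α x = MREstep A M r (μ t) α x) →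
        ∀ α (x : Cfg A Finset.univ),
          Filter.Tendsto (fun t => μ t α x) Filter.atTop
            (nhds (∏ i : Fin n, ∑ β, q β *
              marg A (Finset.subset_univ {i}) (μ 0 β) (res A (Finset.subset_univ {i}) x))) ∧
          ∀ t, |μ t α x - ∏ i : Fin n, ∑ β, q β *
              marg A (Finset.subset_univ {i}) (μ 0 β) (res A (Finset.subset_univ {i}) x)| ≤
            C * γ ^ t := by
  classical
  have hLne : Nonempty L := by
    by_contra hL
    rw [not_nonempty_iff] at hL
    rw [Finset.univ_eq_empty, Finset.sum_empty] at hq1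
    norm_num at hq1
  obtain ⟨γD, ⟨hγD0, hγD1⟩, CD, hCD, hdoeb⟩ :=
    doeblin_conv M hM0 hM1 hprim q hq0 hq1 hqstat
  -- the pair separation mass
  set pairs : Finset (Fin n × Fin n) :=
    (Finset.univ ×ˢ Finset.univ).filter (fun p => p.1 ≠ p.2) with hpairs
  set bmass : Fin n × Fin n → ℝ := fun p =>
    ∑ P ∈ (partitionsOf (Finset.univ : Finset (Fin n))).filter
      (fun P => ∃ d ∈ P, p.1 ∈ d ∧ p.2 ∈ d), r P with hbmass
  have hbm0 : ∀ p, 0 ≤ bmass p := fun p => Finset.sum_nonneg fun P _ => hr0 P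
  have hbm1 : ∀ p ∈ pairs, bmass p < 1 := by
    intro p hp
    have hne : p.1 ≠ p.2 := (Finset.mem_filter.mp hp).2
    obtain ⟨Ps, hPs, hrPs, hsepPs⟩ := hsep p.1 p.2 hne
    have hPsnot : Ps ∉ (partitionsOf (Finset.univ : Finset (Fin n))).filter
        (fun P => ∃ d ∈ P, p.1 ∈ d ∧ p.2 ∈ d) := by
      intro hmem
      obtain ⟨d, hd, hd12⟩ := (Finset.mem_filter.mp hmem).2
      exact hsepPs d hd hd12
    have hsub : (partitionsOf (Finset.univ : Finset (Fin n))).filter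
        (fun P => ∃ d ∈ P, p.1 ∈ d ∧ p.2 ∈ d)
        ⊆ (partitionsOf (Finset.univ : Finset (Fin n))).erase Ps := by
      intro P hP
      refine Finset.mem_erase.mpr ⟨?_, (Finset.mem_filter.mp hP).1⟩
      intro he
      exact hPsnot (he ▸ hP)
    have h1 : bmass p ≤ ∑ P ∈ (partitionsOf (Finset.univ : Finset (Fin n))).erase Ps, r P :=
      Finset.sum_le_sum_of_subset_of_nonneg hsub (fun P _ _ => hr0 P)
    have h2 : r Ps + ∑ P ∈ (partitionsOf (Finset.univ : Finset (Fin n))).erase Ps, r P = 1 := by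
      rw [Finset.add_sum_erase _ r hPs]
      exact hr1
    linarith
  set ρ : ℝ := if h : pairs.Nonempty then pairs.sup' h bmass else 1/2 with hρ
  have hρ0 : 0 ≤ ρ := by
    rw [hρ]
    split
    · rename_i h
      obtain ⟨p, hp⟩ := h
      exact le_trans (hbm0 p) (Finset.le_sup' bmass hp)
    · norm_num
  have hρ1 : ρ < 1 := by
    rw [hρ]
    split
    · rename_i h
      rw [Finset.sup'_lt_iff]
      exact fun p hp => hbm1 p hp
    · norm_num
  have hbadU : ∀ U : Finset (Fin n), 2 ≤ U.card →
      ∑ P ∈ (partitionsOf (Finset.univ : Finset (Fin n))).filter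
        (fun P => ∃ d ∈ P, U ⊆ d), r P ≤ ρ := by
    intro U hU
    obtain ⟨i, hi, j, hj, hij⟩ := Finset.one_lt_card.mp hU
    have hpmem : (i, j) ∈ pairs := by
      rw [hpairs]
      simp [hij]
    have hsub : (partitionsOf (Finset.univ : Finset (Fin n))).filter
        (fun P => ∃ d ∈ P, U ⊆ d)
        ⊆ (partitionsOf (Finset.univ : Finset (Fin n))).filter
          (fun P => ∃ d ∈ P, i ∈ d ∧ j ∈ d) := by
      intro P hP
      obtain ⟨hPS, d, hd, hUd⟩ := Finset.mem_filter.mp hP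
      exact Finset.mem_filter.mpr ⟨hPS, d, hd, hUd hi, hUd hj⟩
    refine le_trans (Finset.sum_le_sum_of_subset_of_nonneg hsub (fun P _ _ => hr0 P)) ?_
    have : bmass (i, j) ≤ ρ := by
      rw [hρ, dif_pos ⟨(i, j), hpmem⟩]
      exact Finset.le_sup' bmass hpmem
    exact this
  set γ : ℝ := max γD ((1 + ρ)/2) with hγ
  have hγ0 : 0 < γ := lt_of_lt_of_le hγD0 (le_max_left _ _)
  have hγ1 : γ < 1 := max_lt hγD1 (by linarith)
  have hργ : ρ < γ := lt_of_lt_of_le (by linarith) (le_max_right _ _)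
  have hdoeb' : ∀ v : ℕ → L → ℝ, (∀ t a, v (t+1) a = ∑ b, M a b * v t b) →
      (∀ b, 0 ≤ v 0 b ∧ v 0 b ≤ 1) → ∀ t a, |v t a - ∑ b, q b * v 0 b| ≤ CD * γ ^ t := by
    intro v h1 h2 t a
    refine le_trans (hdoeb v h1 h2 t a) ?_
    exact mul_le_mul_of_nonneg_left
      (pow_le_pow_left₀ hγD0.le (le_max_left _ _) t) hCD.le
  obtain ⟨C, hCpos, hCC⟩ := main_ind A M hM0 hM1 q hq0 hq1 r hr0 hr1 γ hγ0 hγ1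
    CD hCD hdoeb' ρ hρ0 hργ hbadU n
  refine ⟨γ, ⟨hγ0, hγ1⟩, C, hCpos, ?_⟩
  intro μ h0 hrec α x
  have hcardn : (Finset.univ : Finset (Fin n)).card ≤ n := by
    rw [Finset.card_univ, Fintype.card_fin]
  have hbound : ∀ t, |μ t α x - ∏ i : Fin n, ∑ β, q β *
      marg A (Finset.subset_univ {i}) (μ 0 β) (res A (Finset.subset_univ {i}) x)| ≤
      C * γ ^ t := by
    intro t
    have := hCC μ h0 hrec Finset.univ hcardn t α x
    rwa [marg_self, piU_univ] at this
  constructor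
  · rw [← tendsto_sub_nhds_zero_iff]
    have hg0 : Filter.Tendsto (fun t : ℕ => C * γ ^ t) Filter.atTop (nhds 0) := by
      have := (tendsto_pow_atTop_nhds_zero_of_lt_one hγ0.le hγ1).const_mul C
      simpa using this
    apply squeeze_zero_norm _ hg0
    intro t
    simpa [Real.norm_eq_abs] using hbound t
  · exact hbound
end

section
/- Pre-absorption structure of maximal-sojourn states: assume ⋀{δ : r_δ > 0} equals the singleton partition δ_min and r_{δ_min} ≠ 1. Let η be the maximal sojourn probability of the unlabelled partitioning process over non-absorbing reachable states, and let F be the set of reachable states δ ≠ δ_min with T^{ul}_{δδ} = η. Then every δ ∈ F satisfies T^{ul}_{δδ} + T^{ul}_{δ,δ_min} = 1; i.e., from δ the chain either stays put or is absorbed in one step. -/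
open scoped Classical

variable {n : ℕ}

/-- The type of partitions of the full set of sites `[n]`. -/
abbrev PT (n : ℕ) := {P : Finset (Finset (Fin n)) // IsPartition (Finset.univ : Finset (Fin n)) P}

/-- The partition of `[n]` into singletons. -/
def singletonsPartition (n : ℕ) : Finset (Finset (Fin n)) :=
  Finset.univ.image fun i => ({i} : Finset (Fin n))

/-- The marginal recombination probability `r^d_ε = ∑_{δ' : δ'|_d = ε} r_{δ'}`. -/
noncomputable def rMarg (r : Finset (Finset (Fin n)) → ℝ) (d : Finset (Fin n))
    (ε : Finset (Finset (Fin n))) : ℝ :=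
  ∑ P ∈ (partitionsOf (Finset.univ : Finset (Fin n))).filter
      (fun P => restrictP P d = ε), r P

/-- The entry `T^{ul}_{δε}` of the transition matrix of the unlabelled partitioning process. -/
noncomputable def TulEnt (r : Finset (Finset (Fin n)) → ℝ)
    (P Q : Finset (Finset (Fin n))) : ℝ :=
  if RefinesP Q P then ∏ d ∈ P, rMarg r d (restrictP Q d) else 0

/-- The transition matrix `T^{ul}` of the unlabelled partitioning process. -/
noncomputable def TulMat (r : Finset (Finset (Fin n)) → ℝ) : Matrix (PT n) (PT n) ℝ :=
  fun P Q => TulEnt r P.1 Q.1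

section Aux
variable {n : ℕ}

lemma mem_partitionsOf {U : Finset (Fin n)} {P : Finset (Finset (Fin n))} :
    P ∈ partitionsOf U ↔ IsPartition U P := by
  simp [partitionsOf]

lemma mem_restrictP {P : Finset (Finset (Fin n))} {d b : Finset (Fin n)} :
    b ∈ restrictP P d ↔ (∃ c ∈ P, c ∩ d = b) ∧ b.Nonempty := by
  simp [restrictP]

lemma restrict_self {P : Finset (Finset (Fin n))} {d : Finset (Fin n)}
    (hdisj : ∀ b ∈ P, ∀ c ∈ P, b ≠ c → Disjoint b c) (hd : d ∈ P) (hdne : d.Nonempty) :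
    restrictP P d = {d} := by
  ext b
  rw [mem_restrictP, Finset.mem_singleton]
  constructor
  · rintro ⟨⟨c, hc, rfl⟩, hne⟩
    by_cases hcd : c = d
    · simp [hcd]
    · exact (hne.ne_empty (Finset.disjoint_iff_inter_eq_empty.mp (hdisj c hc d hd hcd))).elim
  · rintro rfl
    exact ⟨⟨_, hd, Finset.inter_self _⟩, hdne⟩

lemma restrict_singleton {U : Finset (Fin n)} {P : Finset (Finset (Fin n))}
    (hP : IsPartition U P) {i : Fin n} (hi : i ∈ U) :
    restrictP P {i} = {({i} : Finset (Fin n))} := by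
  obtain ⟨hne, hdisj, hsup⟩ := hP
  ext b
  rw [mem_restrictP, Finset.mem_singleton]
  constructor
  · rintro ⟨⟨c, hc, rfl⟩, hbne⟩
    obtain ⟨x, hx⟩ := hbne
    obtain ⟨hxc, hxi⟩ := Finset.mem_inter.mp hx
    rw [Finset.mem_singleton] at hxi
    refine Finset.Subset.antisymm Finset.inter_subset_right ?_
    intro y hy
    rw [Finset.mem_singleton] at hy
    rw [hy]
    exact Finset.mem_inter.mpr ⟨hxi ▸ hxc, Finset.mem_singleton_self _⟩
  · rintro rfl
    rw [← hsup] at hi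
    obtain ⟨c, hc, hic⟩ := Finset.mem_sup.mp hi
    exact ⟨⟨c, hc, by
      apply Finset.Subset.antisymm Finset.inter_subset_right
      intro y hy; rw [Finset.mem_singleton] at hy; rw [hy]
      exact Finset.mem_inter.mpr ⟨hic, Finset.mem_singleton_self i⟩⟩,
      ⟨i, Finset.mem_singleton_self i⟩⟩

lemma restrict_isPartition {U : Finset (Fin n)} {P : Finset (Finset (Fin n))}
    (hP : IsPartition U P) {d : Finset (Fin n)} (hd : d ⊆ U) :
    IsPartition d (restrictP P d) := by
  obtain ⟨hne, hdisj, hsup⟩ := hP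
  refine ⟨fun b hb => (mem_restrictP.mp hb).2, ?_, ?_⟩
  · rintro b hb c hc hbc
    obtain ⟨⟨b', hb', rfl⟩, -⟩ := mem_restrictP.mp hb
    obtain ⟨⟨c', hc', rfl⟩, -⟩ := mem_restrictP.mp hc
    have hb'c' : b' ≠ c' := fun h => hbc (by rw [h])
    exact ((hdisj b' hb' c' hc' hb'c').mono Finset.inter_subset_left
      Finset.inter_subset_left)
  · apply le_antisymm
    · apply Finset.sup_le
      rintro b hb
      obtain ⟨⟨c, hc, rfl⟩, -⟩ := mem_restrictP.mp hb
      exact Finset.inter_subset_right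
    · intro x hx
      have : x ∈ P.sup id := by rw [hsup]; exact hd hx
      obtain ⟨c, hc, hxc⟩ := Finset.mem_sup.mp this
      exact Finset.mem_sup.mpr ⟨c ∩ d, mem_restrictP.mpr
        ⟨⟨c, hc, rfl⟩, ⟨x, Finset.mem_inter.mpr ⟨hxc, hx⟩⟩⟩, Finset.mem_inter.mpr ⟨hxc, hx⟩⟩

lemma restrict_restrict {P : Finset (Finset (Fin n))} {d e : Finset (Fin n)} (hed : e ⊆ d) :
    restrictP (restrictP P d) e = restrictP P e := by
  ext b
  rw [mem_restrictP, mem_restrictP]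
  constructor
  · rintro ⟨⟨c, hc, rfl⟩, hne⟩
    obtain ⟨⟨c', hc', rfl⟩, -⟩ := mem_restrictP.mp hc
    refine ⟨⟨c', hc', ?_⟩, hne⟩
    rw [Finset.inter_assoc, Finset.inter_eq_right.mpr hed]
  · rintro ⟨⟨c, hc, rfl⟩, hne⟩
    refine ⟨⟨c ∩ d, mem_restrictP.mpr ⟨⟨c, hc, rfl⟩, ?_⟩, ?_⟩, hne⟩
    · exact hne.mono (Finset.inter_subset_inter Finset.Subset.rfl hed)
    · rw [Finset.inter_assoc, Finset.inter_eq_right.mpr hed]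

lemma restrict_pair {d e : Finset (Fin n)} (hed : e ⊆ d) (hne : e.Nonempty) :
    restrictP {d} e = {e} := by
  ext b
  rw [mem_restrictP, Finset.mem_singleton]
  constructor
  · rintro ⟨⟨c, hc, rfl⟩, -⟩
    rw [Finset.mem_singleton] at hc; subst hc
    rw [Finset.inter_eq_right.mpr hed]
  · rintro rfl
    exact ⟨⟨d, Finset.mem_singleton_self d, Finset.inter_eq_right.mpr hed⟩, hne⟩

lemma restrict_singletonsPartition {d : Finset (Fin n)} :
    restrictP (singletonsPartition n) d = d.image (fun i => ({i} : Finset (Fin n))) := by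
  ext b
  rw [mem_restrictP]
  simp only [singletonsPartition, Finset.mem_image, Finset.mem_univ, true_and]
  constructor
  · rintro ⟨⟨c, ⟨i, rfl⟩, rfl⟩, hne⟩
    obtain ⟨x, hx⟩ := hne
    obtain ⟨hxi, hxd⟩ := Finset.mem_inter.mp hx
    rw [Finset.mem_singleton] at hxi
    subst hxi
    exact ⟨x, hxd, (Finset.inter_eq_left.mpr (Finset.singleton_subset_iff.mpr hxd)).symm⟩
  · rintro ⟨i, hi, rfl⟩
    exact ⟨⟨{i}, ⟨i, rfl⟩, Finset.inter_eq_left.mpr (Finset.singleton_subset_iff.mpr hi)⟩,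
      ⟨i, Finset.mem_singleton_self i⟩⟩

end Aux

section Aux2
variable {n : ℕ}

lemma part_nonempty {d : Finset (Fin n)} {Q : Finset (Finset (Fin n))}
    (hQ : IsPartition d Q) (hd : d.Nonempty) : Q.Nonempty := by
  by_contra h
  rw [Finset.not_nonempty_iff_eq_empty] at h
  subst h
  simp only [IsPartition, Finset.sup_empty] at hQ
  exact hd.ne_empty (hQ.2.2.symm ▸ rfl)

lemma part_card_two {d : Finset (Fin n)} {Q : Finset (Finset (Fin n))}
    (hQ : IsPartition d Q) (hd : d.Nonempty) (hne : Q ≠ {d}) : 2 ≤ Q.card := by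
  rcases Nat.lt_or_ge Q.card 2 with h | h
  · interval_cases h' : Q.card
    · rw [Finset.card_eq_zero] at h'
      exact absurd h' (part_nonempty hQ hd).ne_empty
    · obtain ⟨b, rfl⟩ := Finset.card_eq_one.mp h'
      have : b = d := by
        have := hQ.2.2
        simpa [Finset.sup_singleton] using this
      exact absurd (by rw [this]) hne
  · exact h

lemma partition_subset_eq {U : Finset (Fin n)} {P Q : Finset (Finset (Fin n))}
    (hP : IsPartition U P) (hQ : IsPartition U Q) (hPQ : P ⊆ Q) : P = Q := by
  apply Finset.Subset.antisymm hPQ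
  intro b hb
  by_contra hbP
  obtain ⟨x, hx⟩ := hQ.1 b hb
  have hxU : x ∈ U := by
    rw [← hQ.2.2]; exact Finset.mem_sup.mpr ⟨b, hb, hx⟩
  rw [← hP.2.2] at hxU
  obtain ⟨c, hc, hxc⟩ := Finset.mem_sup.mp hxU
  have hcb : c ≠ b := fun h => hbP (h ▸ hc)
  exact Finset.disjoint_left.mp (hQ.2.1 c (hPQ hc) b hb hcb) hxc hx

lemma partition_card_le {P : Finset (Finset (Fin n))}
    (hP : IsPartition (Finset.univ : Finset (Fin n)) P) : P.card ≤ n := by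
  have hdisj : ∀ b ∈ P, ∀ c ∈ P, b ≠ c → Disjoint b c := hP.2.1
  have h1 : P.card ≤ ∑ b ∈ P, b.card := by
    calc P.card = ∑ _b ∈ P, 1 := by rw [Finset.sum_const, smul_eq_mul, mul_one]
    _ ≤ ∑ b ∈ P, b.card := Finset.sum_le_sum fun b hb => Finset.card_pos.mpr (hP.1 b hb)
  have h2 : ∑ b ∈ P, b.card = n := by
    have : P.biUnion id = Finset.univ := by
      rw [← Finset.sup_eq_biUnion]; exact hP.2.2
    calc ∑ b ∈ P, b.card = (P.biUnion id).card :=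
        (Finset.card_biUnion (fun b hb c hc hbc => hdisj b hb c hc hbc)).symm
    _ = n := by rw [this]; simp
  omega

lemma all_singletons {Q : Finset (Finset (Fin n))}
    (hQ : IsPartition (Finset.univ : Finset (Fin n)) Q)
    (h : ∀ b ∈ Q, b.card ≤ 1) : Q = singletonsPartition n := by
  ext b
  rw [singletonsPartition, Finset.mem_image]
  constructor
  · intro hb
    obtain ⟨x, hx⟩ := hQ.1 b hb
    refine ⟨x, Finset.mem_univ x, ?_⟩
    have : b.card = 1 := le_antisymm (h b hb) (Finset.card_pos.mpr ⟨x, hx⟩)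
    obtain ⟨y, rfl⟩ := Finset.card_eq_one.mp this
    rw [Finset.mem_singleton] at hx; rw [hx]
  · rintro ⟨i, -, rfl⟩
    have hiU : i ∈ (Finset.univ : Finset (Fin n)) := Finset.mem_univ i
    rw [← hQ.2.2] at hiU
    obtain ⟨c, hc, hic⟩ := Finset.mem_sup.mp hiU
    simp only [id_eq] at hic
    have : c = {i} := by
      have hc1 : c.card = 1 := le_antisymm (h c hc) (Finset.card_pos.mpr ⟨i, hic⟩)
      obtain ⟨y, rfl⟩ := Finset.card_eq_one.mp hc1
      rw [Finset.mem_singleton] at hic; rw [hic]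
    exact this ▸ hc

lemma exists_nonsingleton {Q : Finset (Finset (Fin n))}
    (hQ : IsPartition (Finset.univ : Finset (Fin n)) Q)
    (h : Q ≠ singletonsPartition n) : ∃ e ∈ Q, 2 ≤ e.card := by
  by_contra hc
  push_neg at hc
  exact h (all_singletons hQ fun b hb => by have := hc b hb; omega)

lemma refines_all_restrict_eq {Q P : Finset (Finset (Fin n))}
    (hQ : IsPartition (Finset.univ : Finset (Fin n)) Q)
    (hP : IsPartition (Finset.univ : Finset (Fin n)) P)
    (href : RefinesP Q P) (h : ∀ d ∈ P, restrictP Q d = {d}) : Q = P := by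
  apply (partition_subset_eq hP hQ ?_).symm
  intro d hd
  have : d ∈ restrictP Q d := by rw [h d hd]; exact Finset.mem_singleton_self d
  obtain ⟨⟨b, hb, hbd⟩, hdne⟩ := mem_restrictP.mp this
  obtain ⟨d', hd', hbd'⟩ := href b hb
  have hdb : d ⊆ b := by
    intro y hy
    rw [← hbd] at hy
    exact (Finset.mem_inter.mp hy).1
  obtain ⟨x, hxd⟩ := hdne
  have hdd' : d = d' := by
    by_contra hne
    exact Finset.disjoint_left.mp (hP.2.1 d hd d' hd' hne) hxd (hbd' (hdb hxd))
  have : b = d := Finset.Subset.antisymm (hdd' ▸ hbd') hdb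
  exact this ▸ hb

-- glue construction
lemma glue_isPartition {ε : Finset (Finset (Fin n))} {f : Finset (Fin n) → Finset (Finset (Fin n))}
    (hε : IsPartition (Finset.univ : Finset (Fin n)) ε)
    (hf : ∀ d ∈ ε, IsPartition d (f d)) :
    IsPartition (Finset.univ : Finset (Fin n)) (ε.biUnion f) := by
  have hsub : ∀ d ∈ ε, ∀ b ∈ f d, b ⊆ d := by
    intro d hd b hb
    have := (hf d hd).2.2
    rw [← this]
    exact Finset.le_sup (f := id) hb
  refine ⟨?_, ?_, ?_⟩
  · intro b hb
    obtain ⟨d, hd, hbd⟩ := Finset.mem_biUnion.mp hb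
    exact (hf d hd).1 b hbd
  · intro b hb c hc hbc
    obtain ⟨d, hd, hbd⟩ := Finset.mem_biUnion.mp hb
    obtain ⟨d', hd', hcd'⟩ := Finset.mem_biUnion.mp hc
    by_cases hdd' : d = d'
    · subst hdd'; exact (hf d hd).2.1 b hbd c hcd' hbc
    · exact ((hε.2.1 d hd d' hd' hdd').mono (hsub d hd b hbd) (hsub d' hd' c hcd'))
  · rw [Finset.sup_biUnion]
    rw [← hε.2.2]
    apply Finset.sup_congr rfl
    intro d hd
    exact (hf d hd).2.2

lemma glue_refines {ε : Finset (Finset (Fin n))} {f : Finset (Fin n) → Finset (Finset (Fin n))}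
    (hf : ∀ d ∈ ε, IsPartition d (f d)) : RefinesP (ε.biUnion f) ε := by
  intro b hb
  obtain ⟨d, hd, hbd⟩ := Finset.mem_biUnion.mp hb
  refine ⟨d, hd, ?_⟩
  have := (hf d hd).2.2
  rw [← this]
  exact Finset.le_sup (f := id) hbd

lemma glue_restrict {ε : Finset (Finset (Fin n))} {f : Finset (Fin n) → Finset (Finset (Fin n))}
    (hε : IsPartition (Finset.univ : Finset (Fin n)) ε)
    (hf : ∀ d ∈ ε, IsPartition d (f d)) {d : Finset (Fin n)} (hd : d ∈ ε) :
    restrictP (ε.biUnion f) d = f d := by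
  have hsub : ∀ d' ∈ ε, ∀ b ∈ f d', b ⊆ d' := by
    intro d' hd' b hb
    have := (hf d' hd').2.2
    rw [← this]
    exact Finset.le_sup (f := id) hb
  ext b
  rw [mem_restrictP]
  constructor
  · rintro ⟨⟨c, hc, rfl⟩, hne⟩
    obtain ⟨d', hd', hcd'⟩ := Finset.mem_biUnion.mp hc
    by_cases hdd' : d' = d
    · subst hdd'
      rwa [Finset.inter_eq_left.mpr (hsub d' hd' c hcd')]
    · have : Disjoint c d := (hε.2.1 d' hd' d hd hdd').mono_left (hsub d' hd' c hcd')
      exact absurd (Finset.disjoint_iff_inter_eq_empty.mp this) hne.ne_empty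
  · intro hb
    refine ⟨⟨b, Finset.mem_biUnion.mpr ⟨d, hd, hb⟩,
      Finset.inter_eq_left.mpr (hsub d hd b hb)⟩, (hf d hd).1 b hb⟩

lemma glue_card_lt {ε : Finset (Finset (Fin n))} {f : Finset (Fin n) → Finset (Finset (Fin n))}
    (hε : IsPartition (Finset.univ : Finset (Fin n)) ε)
    (hf : ∀ d ∈ ε, IsPartition d (f d)) {d₀ : Finset (Fin n)} (hd₀ : d₀ ∈ ε)
    (hsplit : f d₀ ≠ {d₀}) : ε.card < (ε.biUnion f).card := by
  have hsub : ∀ d' ∈ ε, ∀ b ∈ f d', b ⊆ d' := by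
    intro d' hd' b hb
    have := (hf d' hd').2.2
    rw [← this]
    exact Finset.le_sup (f := id) hb
  have hdisj : ∀ d ∈ ε, ∀ d' ∈ ε, d ≠ d' → Disjoint (f d) (f d') := by
    intro d hd d' hd' hdd'
    rw [Finset.disjoint_left]
    intro b hb hb'
    have h1 : b ⊆ d := hsub d hd b hb
    have h2 : b ⊆ d' := hsub d' hd' b hb'
    obtain ⟨x, hx⟩ := (hf d hd).1 b hb
    exact Finset.disjoint_left.mp (hε.2.1 d hd d' hd' hdd') (h1 hx) (h2 hx)
  rw [Finset.card_biUnion hdisj]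
  have h1 : ∀ d ∈ ε, 1 ≤ (f d).card :=
    fun d hd => Finset.card_pos.mpr (part_nonempty (hf d hd) (hε.1 d hd))
  have h2 : 2 ≤ (f d₀).card := part_card_two (hf d₀ hd₀) (hε.1 d₀ hd₀) hsplit
  calc ε.card = ∑ _d ∈ ε, 1 := by rw [Finset.sum_const, smul_eq_mul, mul_one]
  _ < ∑ d ∈ ε, (f d).card := by
      apply Finset.sum_lt_sum h1
      exact ⟨d₀, hd₀, h2⟩

-- sigma construction
def sigmaPart (e : Finset (Fin n)) : Finset (Finset (Fin n)) :=
  insert e ((Finset.univ \ e).image fun i => ({i} : Finset (Fin n)))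

lemma mem_sigmaPart {e b : Finset (Fin n)} :
    b ∈ sigmaPart e ↔ b = e ∨ ∃ i, i ∉ e ∧ b = {i} := by
  simp only [sigmaPart, Finset.mem_insert, Finset.mem_image, Finset.mem_sdiff,
    Finset.mem_univ, true_and]
  constructor
  · rintro (rfl | ⟨i, hi, rfl⟩)
    · exact Or.inl rfl
    · exact Or.inr ⟨i, hi, rfl⟩
  · rintro (rfl | ⟨i, hi, rfl⟩)
    · exact Or.inl rfl
    · exact Or.inr ⟨i, hi, rfl⟩

lemma sigma_isPartition {e : Finset (Fin n)} (he : e.Nonempty) :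
    IsPartition (Finset.univ : Finset (Fin n)) (sigmaPart e) := by
  refine ⟨?_, ?_, ?_⟩
  · intro b hb
    rcases mem_sigmaPart.mp hb with rfl | ⟨i, -, rfl⟩
    · exact he
    · exact ⟨i, Finset.mem_singleton_self i⟩
  · intro b hb c hc hbc
    rcases mem_sigmaPart.mp hb with rfl | ⟨i, hi, rfl⟩ <;>
      rcases mem_sigmaPart.mp hc with rfl | ⟨j, hj, rfl⟩
    · exact absurd rfl hbc
    · exact Finset.disjoint_singleton_right.mpr hj
    · exact Finset.disjoint_singleton_left.mpr hi
    · exact Finset.disjoint_singleton_left.mpr (by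
        rw [Finset.mem_singleton]; intro h; exact hbc (by rw [h]))
  · apply Finset.Subset.antisymm (Finset.subset_univ _)
    intro x _
    by_cases hx : x ∈ e
    · exact Finset.mem_sup.mpr ⟨e, mem_sigmaPart.mpr (Or.inl rfl), hx⟩
    · exact Finset.mem_sup.mpr ⟨{x}, mem_sigmaPart.mpr (Or.inr ⟨x, hx, rfl⟩),
        Finset.mem_singleton_self x⟩

lemma sigma_ne_singletons {e : Finset (Fin n)} (he : 2 ≤ e.card) :
    sigmaPart e ≠ singletonsPartition n := by
  intro h
  have : e ∈ singletonsPartition n := h ▸ mem_sigmaPart.mpr (Or.inl rfl)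
  rw [singletonsPartition, Finset.mem_image] at this
  obtain ⟨i, -, rfl⟩ := this
  simp at he

end Aux2

section Aux3
variable {n : ℕ} {r : Finset (Finset (Fin n)) → ℝ}

lemma rMarg_nonneg (hr0 : ∀ P, 0 ≤ r P) (d : Finset (Fin n)) (ε : Finset (Finset (Fin n))) :
    0 ≤ rMarg r d ε :=
  Finset.sum_nonneg fun P _ => hr0 P

lemma filter_sum_add_le {β : Type*} {s : Finset β} (g : β → ℝ) (hg : ∀ x ∈ s, 0 ≤ g x)
    (p q t : β → Prop) [DecidablePred p] [DecidablePred q] [DecidablePred t]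
    (hpq : ∀ x ∈ s, p x → q x → False)
    (hpt : ∀ x ∈ s, p x → t x) (hqt : ∀ x ∈ s, q x → t x) :
    ∑ x ∈ s.filter p, g x + ∑ x ∈ s.filter q, g x ≤ ∑ x ∈ s.filter t, g x := by
  have hdisj : Disjoint (s.filter p) (s.filter q) := by
    rw [Finset.disjoint_left]
    intro x hx hx'
    obtain ⟨hxs, hxp⟩ := Finset.mem_filter.mp hx
    obtain ⟨-, hxq⟩ := Finset.mem_filter.mp hx'
    exact hpq x hxs hxp hxq
  rw [← Finset.sum_union hdisj]
  apply Finset.sum_le_sum_of_subset_of_nonneg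
  · intro x hx
    rcases Finset.mem_union.mp hx with hx' | hx'
    · obtain ⟨hxs, hxp⟩ := Finset.mem_filter.mp hx'
      exact Finset.mem_filter.mpr ⟨hxs, hpt x hxs hxp⟩
    · obtain ⟨hxs, hxq⟩ := Finset.mem_filter.mp hx'
      exact Finset.mem_filter.mpr ⟨hxs, hqt x hxs hxq⟩
  · intro x hx _
    exact hg x (Finset.mem_filter.mp hx).1

lemma rMarg_le_one (hr0 : ∀ P, 0 ≤ r P)
    (hr1 : ∑ P ∈ partitionsOf (Finset.univ : Finset (Fin n)), r P = 1)
    (d : Finset (Fin n)) (ε : Finset (Finset (Fin n))) : rMarg r d ε ≤ 1 := by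
  rw [← hr1]
  exact Finset.sum_le_sum_of_subset_of_nonneg (Finset.filter_subset _ _)
    (fun P _ _ => hr0 P)

lemma rMarg_singleton (hr1 : ∑ P ∈ partitionsOf (Finset.univ : Finset (Fin n)), r P = 1)
    {d : Finset (Fin n)} (hd : d.card = 1) : rMarg r d {d} = 1 := by
  obtain ⟨i, rfl⟩ := Finset.card_eq_one.mp hd
  rw [rMarg, ← hr1]
  apply Finset.sum_congr _ (fun _ _ => rfl)
  rw [Finset.filter_true_of_mem]
  intro P hP
  exact restrict_singleton (mem_partitionsOf.mp hP) (Finset.mem_univ i)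

lemma rMarg_mono (hr0 : ∀ P, 0 ≤ r P) {d e : Finset (Fin n)}
    {A B : Finset (Finset (Fin n))}
    (h : ∀ P ∈ partitionsOf (Finset.univ : Finset (Fin n)), restrictP P d = A →
      restrictP P e = B) : rMarg r d A ≤ rMarg r e B := by
  apply Finset.sum_le_sum_of_subset_of_nonneg
  · intro P hP
    obtain ⟨hP1, hP2⟩ := Finset.mem_filter.mp hP
    exact Finset.mem_filter.mpr ⟨hP1, h P hP1 hP2⟩
  · intro P _ _
    exact hr0 P

lemma rMarg_mem_le {P₀ : Finset (Finset (Fin n))}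
    (hr0 : ∀ P, 0 ≤ r P) (hP₀ : P₀ ∈ partitionsOf (Finset.univ : Finset (Fin n)))
    (d : Finset (Fin n)) : r P₀ ≤ rMarg r d (restrictP P₀ d) :=
  Finset.single_le_sum (fun P _ => hr0 P)
    (Finset.mem_filter.mpr ⟨hP₀, rfl⟩)

lemma TulMat_nonneg (hr0 : ∀ P, 0 ≤ r P) (P Q : PT n) : 0 ≤ TulMat r P Q := by
  rw [TulMat, TulEnt]
  split
  · exact Finset.prod_nonneg fun d _ => rMarg_nonneg hr0 d _
  · exact le_refl 0

lemma Tul_pow_nonneg (hr0 : ∀ P, 0 ≤ r P) (k : ℕ) (P Q : PT n) :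
    0 ≤ (TulMat r ^ k) P Q := by
  induction k generalizing P Q with
  | zero =>
    rw [pow_zero]
    rcases eq_or_ne P Q with rfl | h
    · rw [Matrix.one_apply_eq]; norm_num
    · rw [Matrix.one_apply_ne h]
  | succ k ih =>
    rw [pow_succ, Matrix.mul_apply]
    exact Finset.sum_nonneg fun Q' _ => mul_nonneg (ih P Q') (TulMat_nonneg hr0 Q' Q)

lemma Tul_pow_trans (hr0 : ∀ P, 0 ≤ r P) {a b : ℕ} {x y z : PT n}
    (ha : 0 < (TulMat r ^ a) x y) (hb : 0 < (TulMat r ^ b) y z) :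
    0 < (TulMat r ^ (a + b)) x z := by
  rw [pow_add, Matrix.mul_apply]
  have : 0 < (TulMat r ^ a) x y * (TulMat r ^ b) y z := mul_pos ha hb
  apply lt_of_lt_of_le this
  apply Finset.single_le_sum (f := fun Q => (TulMat r ^ a) x Q * (TulMat r ^ b) Q z)
    (fun Q _ => mul_nonneg (Tul_pow_nonneg hr0 a x Q) (Tul_pow_nonneg hr0 b Q z))
    (Finset.mem_univ y)

lemma Tul_diag (δ : PT n) : TulMat r δ δ = ∏ d ∈ δ.1, rMarg r d {d} := by
  have href : RefinesP δ.1 δ.1 := fun p hp => ⟨p, hp, Finset.Subset.rfl⟩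
  rw [TulMat, TulEnt, if_pos href]
  apply Finset.prod_congr rfl
  intro d hd
  rw [restrict_self δ.2.2.1 hd (δ.2.1 d hd)]

lemma Tul_pos_elim (hr0 : ∀ P, 0 ≤ r P) {δ ε : PT n} (h : 0 < TulMat r δ ε) :
    RefinesP ε.1 δ.1 ∧ ∀ d ∈ δ.1, 0 < rMarg r d (restrictP ε.1 d) := by
  rw [TulMat, TulEnt] at h
  split at h
  · rename_i href
    refine ⟨href, fun d hd => ?_⟩
    rcases (rMarg_nonneg hr0 d (restrictP ε.1 d)).lt_or_eq with h' | h'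
    · exact h'
    · exact absurd (Finset.prod_eq_zero hd h'.symm) h.ne'
  · exact absurd rfl h.ne

lemma Tul_pos_intro {δ ε : PT n} (href : RefinesP ε.1 δ.1)
    (h : ∀ d ∈ δ.1, 0 < rMarg r d (restrictP ε.1 d)) : 0 < TulMat r δ ε := by
  rw [TulMat, TulEnt, if_pos href]
  exact Finset.prod_pos h

lemma prod_le_single {s : Finset (Finset (Fin n))} {f : Finset (Fin n) → ℝ}
    (h0 : ∀ d ∈ s, 0 ≤ f d) (h1 : ∀ d ∈ s, f d ≤ 1) {d : Finset (Fin n)} (hd : d ∈ s) :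
    ∏ x ∈ s, f x ≤ f d := by
  rw [← Finset.mul_prod_erase s f hd]
  calc f d * ∏ x ∈ s.erase d, f x ≤ f d * 1 := by
        apply mul_le_mul_of_nonneg_left _ (h0 d hd)
        apply Finset.prod_le_one
        · exact fun x hx => h0 x (Finset.mem_of_mem_erase hx)
        · exact fun x hx => h1 x (Finset.mem_of_mem_erase hx)
  _ = f d := mul_one _

lemma prod_le_pair {s : Finset (Finset (Fin n))} {f : Finset (Fin n) → ℝ}
    (h0 : ∀ d ∈ s, 0 ≤ f d) (h1 : ∀ d ∈ s, f d ≤ 1) {d d' : Finset (Fin n)}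
    (hd : d ∈ s) (hd' : d' ∈ s) (hdd' : d ≠ d') :
    ∏ x ∈ s, f x ≤ f d * f d' := by
  rw [← Finset.mul_prod_erase s f hd]
  apply mul_le_mul_of_nonneg_left _ (h0 d hd)
  exact prod_le_single (fun x hx => h0 x (Finset.mem_of_mem_erase hx))
    (fun x hx => h1 x (Finset.mem_of_mem_erase hx))
    (Finset.mem_erase.mpr ⟨fun h => hdd' h.symm, hd'⟩)

end Aux3

section Aux4
variable {n : ℕ} {r : Finset (Finset (Fin n)) → ℝ}

lemma partition_card_lt {P : Finset (Finset (Fin n))}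
    (hP : IsPartition (Finset.univ : Finset (Fin n)) P)
    {d₀ : Finset (Fin n)} (hd₀ : d₀ ∈ P) (hc : 2 ≤ d₀.card) : P.card < n := by
  have h1 : P.card + 1 ≤ ∑ b ∈ P, b.card := by
    calc P.card + 1 = (∑ _b ∈ P, 1) + 1 := by rw [Finset.sum_const, smul_eq_mul, mul_one]
    _ ≤ ∑ b ∈ P, b.card := by
        rw [← Finset.sum_erase_add P _ hd₀, ← Finset.sum_erase_add P (fun b => b.card) hd₀]
        have : ∑ b ∈ P.erase d₀, 1 ≤ ∑ b ∈ P.erase d₀, b.card :=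
          Finset.sum_le_sum fun b hb =>
            Finset.card_pos.mpr (hP.1 b (Finset.mem_of_mem_erase hb))
        omega
  have h2 : ∑ b ∈ P, b.card = n := by
    have hb : P.biUnion id = Finset.univ := by
      rw [← Finset.sup_eq_biUnion]; exact hP.2.2
    calc ∑ b ∈ P, b.card = (P.biUnion id).card :=
        (Finset.card_biUnion (fun b hb c hc hbc => hP.2.1 b hb c hc hbc)).symm
    _ = n := by rw [hb]; simp
  omega

lemma singletons_refines {P : Finset (Finset (Fin n))}
    (hP : IsPartition (Finset.univ : Finset (Fin n)) P) :
    RefinesP (singletonsPartition n) P := by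
  intro b hb
  rw [singletonsPartition, Finset.mem_image] at hb
  obtain ⟨i, -, rfl⟩ := hb
  have : i ∈ P.sup id := by rw [hP.2.2]; exact Finset.mem_univ i
  obtain ⟨c, hc, hic⟩ := Finset.mem_sup.mp this
  exact ⟨c, hc, Finset.singleton_subset_iff.mpr hic⟩

lemma sigma_restrict_self {e : Finset (Fin n)} (he : e.Nonempty) :
    restrictP (sigmaPart e) e = {e} :=
  restrict_self (sigma_isPartition he).2.1 (mem_sigmaPart.mpr (Or.inl rfl)) he

lemma sigma_restrict_other {e d : Finset (Fin n)} (hdisj : Disjoint e d) :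
    restrictP (sigmaPart e) d = d.image (fun i => ({i} : Finset (Fin n))) := by
  ext b
  rw [mem_restrictP, Finset.mem_image]
  constructor
  · rintro ⟨⟨c, hc, rfl⟩, hne⟩
    rcases mem_sigmaPart.mp hc with rfl | ⟨i, hi, rfl⟩
    · exact absurd (Finset.disjoint_iff_inter_eq_empty.mp hdisj) hne.ne_empty
    · obtain ⟨x, hx⟩ := hne
      obtain ⟨hxi, hxd⟩ := Finset.mem_inter.mp hx
      rw [Finset.mem_singleton] at hxi
      subst hxi
      exact ⟨x, hxd, (Finset.inter_eq_left.mpr (Finset.singleton_subset_iff.mpr hxd)).symm⟩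
  · rintro ⟨i, hid, rfl⟩
    have hie : i ∉ e := Finset.disjoint_right.mp hdisj hid
    exact ⟨⟨{i}, mem_sigmaPart.mpr (Or.inr ⟨i, hie, rfl⟩),
      Finset.inter_eq_left.mpr (Finset.singleton_subset_iff.mpr hid)⟩,
      ⟨i, Finset.mem_singleton_self i⟩⟩

lemma sigma_diag
    (hr1 : ∑ P ∈ partitionsOf (Finset.univ : Finset (Fin n)), r P = 1)
    {e : Finset (Fin n)} (he2 : 2 ≤ e.card) {σe : PT n} (hσ : σe.1 = sigmaPart e) :
    TulMat r σe σe = rMarg r e {e} := by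
  rw [Tul_diag, hσ, sigmaPart]
  have hnotmem : e ∉ (Finset.univ \ e).image (fun i => ({i} : Finset (Fin n))) := by
    rw [Finset.mem_image]
    rintro ⟨i, -, rfl⟩
    simp at he2
  rw [Finset.prod_insert hnotmem]
  have : ∏ b ∈ (Finset.univ \ e).image (fun i => ({i} : Finset (Fin n))),
      rMarg r b {b} = 1 := by
    rw [Finset.prod_image (fun i _ j _ h => Finset.singleton_injective h)]
    apply Finset.prod_eq_one
    intro i _
    exact rMarg_singleton hr1 (Finset.card_singleton i)
  rw [this, mul_one]

lemma reach_sigma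
    (hr0 : ∀ P, 0 ≤ r P)
    (hr1 : ∑ P ∈ partitionsOf (Finset.univ : Finset (Fin n)), r P = 1)
    (hsep : ∀ i j : Fin n, i ≠ j → ∃ P ∈ partitionsOf (Finset.univ : Finset (Fin n)),
      0 < r P ∧ ∀ d ∈ P, ¬(i ∈ d ∧ j ∈ d)) :
    ∀ (N : ℕ) (ε : PT n) (e : Finset (Fin n)), e ∈ ε.1 → 0 < rMarg r e {e} →
      n ≤ ε.1.card + N → ∀ (σe : PT n), σe.1 = sigmaPart e →
      ∃ m, 0 < (TulMat r ^ m) ε σe := by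
  have hchoice : ∀ d : Finset (Fin n), 2 ≤ d.card →
      ∃ P, P ∈ partitionsOf (Finset.univ : Finset (Fin n)) ∧ 0 < r P ∧
        restrictP P d ≠ {d} := by
    intro d hd
    obtain ⟨i, hi, j, hj, hij⟩ := Finset.one_lt_card.mp hd
    obtain ⟨P, hP, hrP, hsepP⟩ := hsep i j hij
    refine ⟨P, hP, hrP, ?_⟩
    intro hres
    have : d ∈ restrictP P d := by rw [hres]; exact Finset.mem_singleton_self d
    obtain ⟨⟨c, hc, hcd⟩, -⟩ := mem_restrictP.mp this
    have hdc : d ⊆ c := by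
      intro y hy; rw [← hcd] at hy; exact (Finset.mem_inter.mp hy).1
    exact hsepP c hc ⟨hdc hi, hdc hj⟩
  intro N
  induction N with
  | zero =>
    intro ε e he hre hN σe hσ
    by_cases hex : ∃ d ∈ ε.1, d ≠ e ∧ 2 ≤ d.card
    · obtain ⟨d₀, hd₀, -, hc₀⟩ := hex
      have := partition_card_lt ε.2 hd₀ hc₀
      omega
    · -- ε = σe
      push_neg at hex
      have hεσ : ε.1 = sigmaPart e := by
        ext b
        rw [mem_sigmaPart]
        constructor
        · intro hb
          by_cases hbe : b = e
          · exact Or.inl hbe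
          · have hb1 : b.card ≤ 1 := by have := hex b hb hbe; omega
            obtain ⟨x, hx⟩ := ε.2.1 b hb
            have : b = {x} := by
              have : b.card = 1 := le_antisymm hb1 (Finset.card_pos.mpr ⟨x, hx⟩)
              obtain ⟨y, rfl⟩ := Finset.card_eq_one.mp this
              rw [Finset.mem_singleton] at hx; rw [hx]
            subst this
            refine Or.inr ⟨x, ?_, rfl⟩
            exact Finset.disjoint_left.mp (ε.2.2.1 {x} hb e he hbe)
              (Finset.mem_singleton_self x)
        · rintro (rfl | ⟨i, hie, rfl⟩)
          · exact he
          · have : i ∈ ε.1.sup id := by rw [ε.2.2.2]; exact Finset.mem_univ i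
            obtain ⟨c, hc, hic⟩ := Finset.mem_sup.mp this
            simp only [id_eq] at hic
            have hce : c ≠ e := fun h => hie (h ▸ hic)
            have : c = {i} := by
              have hc1 : c.card = 1 := le_antisymm (by have := hex c hc hce; omega)
                (Finset.card_pos.mpr ⟨i, hic⟩)
              obtain ⟨y, rfl⟩ := Finset.card_eq_one.mp hc1
              rw [Finset.mem_singleton] at hic; rw [hic]
            exact this ▸ hc
      have : ε = σe := Subtype.ext (by rw [hεσ, hσ])
      subst this
      exact ⟨0, by rw [pow_zero, Matrix.one_apply_eq]; norm_num⟩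
  | succ N ih =>
    intro ε e he hre hN σe hσ
    by_cases hex : ∃ d ∈ ε.1, d ≠ e ∧ 2 ≤ d.card
    · set f : Finset (Fin n) → Finset (Finset (Fin n)) :=
        fun d => if h : 2 ≤ d.card ∧ d ≠ e then restrictP (hchoice d h.1).choose d
          else {d} with hf
      have hfpart : ∀ d ∈ ε.1, IsPartition d (f d) := by
        intro d hd
        rw [hf]
        dsimp only
        split
        · rename_i h
          exact restrict_isPartition
            (mem_partitionsOf.mp (hchoice d h.1).choose_spec.1) (Finset.subset_univ d)
        · exact ⟨fun b hb => by rw [Finset.mem_singleton] at hb; exact hb ▸ ε.2.1 d hd,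
            fun b hb c hc hbc => by
              rw [Finset.mem_singleton] at hb hc; exact absurd (hb.trans hc.symm) hbc,
            Finset.sup_singleton⟩
      have hfpos : ∀ d ∈ ε.1, 0 < rMarg r d (f d) := by
        intro d hd
        rw [hf]
        dsimp only
        split
        · rename_i h
          obtain ⟨hP, hrP, -⟩ := (hchoice d h.1).choose_spec
          exact lt_of_lt_of_le hrP (rMarg_mem_le hr0 hP d)
        · rename_i h
          push_neg at h
          by_cases hde : d = e
          · subst hde; exact hre
          · have : d.card = 1 := by
              have h2 := h
              have := ε.2.1 d hd
              have hc := Finset.card_pos.mpr this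
              by_contra hcc
              have : 2 ≤ d.card := by omega
              exact hde (h2 this)
            rw [rMarg_singleton hr1 this]
            norm_num
      set ε' : PT n := ⟨ε.1.biUnion f, glue_isPartition ε.2 hfpart⟩ with hε'
      have hstep : 0 < TulMat r ε ε' := by
        apply Tul_pos_intro (glue_refines hfpart)
        intro d hd
        rw [hε']
        rw [glue_restrict ε.2 hfpart hd]
        exact hfpos d hd
      have hee' : e ∈ ε'.1 := by
        have hfe : f e = {e} := by
          rw [hf]
          dsimp only
          rw [dif_neg (by simp)]
        exact Finset.mem_biUnion.mpr ⟨e, he, hfe ▸ Finset.mem_singleton_self e⟩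
      have hcard : ε.1.card < ε'.1.card := by
        obtain ⟨d₀, hd₀, hd₀e, hc₀⟩ := hex
        apply glue_card_lt ε.2 hfpart hd₀
        rw [hf]
        dsimp only
        rw [dif_pos ⟨hc₀, hd₀e⟩]
        exact (hchoice d₀ hc₀).choose_spec.2.2
      obtain ⟨m, hm⟩ := ih ε' e hee' hre (by omega) σe hσ
      refine ⟨1 + m, Tul_pow_trans hr0 ?_ hm⟩
      rw [pow_one]
      exact hstep
    · -- same terminal case as above
      push_neg at hex
      have hεσ : ε.1 = sigmaPart e := by
        ext b
        rw [mem_sigmaPart]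
        constructor
        · intro hb
          by_cases hbe : b = e
          · exact Or.inl hbe
          · have hb1 : b.card ≤ 1 := by have := hex b hb hbe; omega
            obtain ⟨x, hx⟩ := ε.2.1 b hb
            have : b = {x} := by
              have : b.card = 1 := le_antisymm hb1 (Finset.card_pos.mpr ⟨x, hx⟩)
              obtain ⟨y, rfl⟩ := Finset.card_eq_one.mp this
              rw [Finset.mem_singleton] at hx; rw [hx]
            subst this
            refine Or.inr ⟨x, ?_, rfl⟩
            exact Finset.disjoint_left.mp (ε.2.2.1 {x} hb e he hbe)
              (Finset.mem_singleton_self x)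
        · rintro (rfl | ⟨i, hie, rfl⟩)
          · exact he
          · have : i ∈ ε.1.sup id := by rw [ε.2.2.2]; exact Finset.mem_univ i
            obtain ⟨c, hc, hic⟩ := Finset.mem_sup.mp this
            simp only [id_eq] at hic
            have hce : c ≠ e := fun h => hie (h ▸ hic)
            have : c = {i} := by
              have hc1 : c.card = 1 := le_antisymm (by have := hex c hc hce; omega)
                (Finset.card_pos.mpr ⟨i, hic⟩)
              obtain ⟨y, rfl⟩ := Finset.card_eq_one.mp hc1
              rw [Finset.mem_singleton] at hic; rw [hic]
            exact this ▸ hc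
      have : ε = σe := Subtype.ext (by rw [hεσ, hσ])
      subst this
      exact ⟨0, by rw [pow_zero, Matrix.one_apply_eq]; norm_num⟩

end Aux4

section Aux5
variable {n : ℕ} {r : Finset (Finset (Fin n)) → ℝ}

lemma rMarg_add_le (hr0 : ∀ P, 0 ≤ r P) {d e : Finset (Fin n)}
    {A B : Finset (Finset (Fin n))} (hAB : A ≠ B)
    (h1 : ∀ P ∈ partitionsOf (Finset.univ : Finset (Fin n)), restrictP P d = A →
      restrictP P e = {e})
    (h2 : ∀ P ∈ partitionsOf (Finset.univ : Finset (Fin n)), restrictP P d = B →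
      restrictP P e = {e}) :
    rMarg r d A + rMarg r d B ≤ rMarg r e {e} := by
  simp only [rMarg]
  exact filter_sum_add_le (s := partitionsOf (Finset.univ : Finset (Fin n))) r
    (fun P _ => hr0 P) (fun P => restrictP P d = A) (fun P => restrictP P d = B)
    (fun P => restrictP P e = {e})
    (fun P _ hA hB => hAB (by rw [← hA, hB])) h1 h2

lemma rMarg_add_le_one (hr0 : ∀ P, 0 ≤ r P)
    (hr1 : ∑ P ∈ partitionsOf (Finset.univ : Finset (Fin n)), r P = 1)
    {d : Finset (Fin n)} {A B : Finset (Finset (Fin n))} (hAB : A ≠ B) :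
    rMarg r d A + rMarg r d B ≤ 1 := by
  rw [← hr1]
  simp only [rMarg]
  have := filter_sum_add_le (s := partitionsOf (Finset.univ : Finset (Fin n))) r
    (fun P _ => hr0 P)
    (fun P => restrictP P d = A) (fun P => restrictP P d = B) (fun _ => True)
    (fun P _ hA hB => hAB (by rw [← hA, hB])) (fun _ _ _ => trivial) (fun _ _ _ => trivial)
  rwa [Finset.filter_true] at this

lemma no_intermediate
    (hr0 : ∀ P, 0 ≤ r P)
    (hr1 : ∑ P ∈ partitionsOf (Finset.univ : Finset (Fin n)), r P = 1)
    (hsep : ∀ i j : Fin n, i ≠ j → ∃ P ∈ partitionsOf (Finset.univ : Finset (Fin n)),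
      0 < r P ∧ ∀ d ∈ P, ¬(i ∈ d ∧ j ∈ d))
    (δtop δmin : PT n)
    (hδmin : δmin.1 = singletonsPartition n)
    (hne : (Finset.univ.filter fun δ : PT n =>
        (∃ k : ℕ, 0 < (TulMat r ^ k) δtop δ) ∧ δ ≠ δmin).Nonempty)
    (η : ℝ)
    (hη : η = (Finset.univ.filter fun δ : PT n =>
        (∃ k : ℕ, 0 < (TulMat r ^ k) δtop δ) ∧ δ ≠ δmin).sup' hne fun δ => TulMat r δ δ)
    (δ : PT n) (hreach : ∃ k : ℕ, 0 < (TulMat r ^ k) δtop δ)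
    (hδne : δ ≠ δmin) (hmax : TulMat r δ δ = η) :
    ∀ ε : PT n, 0 < TulMat r δ ε → ε = δ ∨ ε = δmin := by
  intro ε hpos
  by_contra hcon
  push_neg at hcon
  obtain ⟨hεδ, hεmin⟩ := hcon
  obtain ⟨href, hfac⟩ := Tul_pos_elim hr0 hpos
  have hd₁ : ∃ d₁ ∈ δ.1, restrictP ε.1 d₁ ≠ {d₁} := by
    by_contra h
    push_neg at h
    exact hεδ (Subtype.ext (refines_all_restrict_eq ε.2 δ.2 href h))
  obtain ⟨d₁, hd₁δ, hd₁ne⟩ := hd₁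
  have hεsing : ε.1 ≠ singletonsPartition n :=
    fun h => hεmin (Subtype.ext (h.trans hδmin.symm))
  obtain ⟨e, heε, he2⟩ := exists_nonsingleton ε.2 hεsing
  have hene : e.Nonempty := Finset.card_pos.mp (by omega)
  obtain ⟨d, hdδ, hed⟩ := href e heε
  have heεd : e ∈ restrictP ε.1 d :=
    mem_restrictP.mpr ⟨⟨e, heε, Finset.inter_eq_left.mpr hed⟩, hene⟩
  have himp1 : ∀ P ∈ partitionsOf (Finset.univ : Finset (Fin n)),
      restrictP P d = {d} → restrictP P e = {e} := by
    intro P hP h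
    rw [← restrict_restrict hed, h]
    exact restrict_pair hed hene
  have himp2 : ∀ P ∈ partitionsOf (Finset.univ : Finset (Fin n)),
      restrictP P d = restrictP ε.1 d → restrictP P e = {e} := by
    intro P hP h
    rw [← restrict_restrict hed, h]
    exact restrict_self (restrict_isPartition ε.2 (Finset.subset_univ d)).2.1 heεd hene
  have hre_pos : 0 < rMarg r e {e} :=
    lt_of_lt_of_le (hfac d hdδ) (rMarg_mono hr0 (himp2))
  have h01 : ∀ d' ∈ δ.1, 0 ≤ rMarg r d' {d'} := fun d' _ => rMarg_nonneg hr0 _ _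
  have h11 : ∀ d' ∈ δ.1, rMarg r d' {d'} ≤ 1 := fun d' _ => rMarg_le_one hr0 hr1 _ _
  have hηprod : η = ∏ d' ∈ δ.1, rMarg r d' {d'} := hmax.symm.trans (Tul_diag δ)
  have hre_gt : η < rMarg r e {e} := by
    by_cases hdd : restrictP ε.1 d = {d}
    · have hed' : e = d := Finset.mem_singleton.mp (hdd ▸ heεd)
      have hdne₁ : d ≠ d₁ := fun h => hd₁ne (h ▸ hdd)
      have h2 : η ≤ rMarg r d {d} * rMarg r d₁ {d₁} := by
        rw [hηprod]
        exact prod_le_pair h01 h11 hdδ hd₁δ hdne₁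
      have h3 : rMarg r d₁ {d₁} < 1 := by
        have hle := rMarg_add_le_one (d := d₁) hr0 hr1
          (show ({d₁} : Finset (Finset (Fin n))) ≠ restrictP ε.1 d₁ from
            fun h => hd₁ne h.symm)
        have hpos₁ := hfac d₁ hd₁δ
        linarith
      have h4 : 0 < rMarg r d {d} := by
        have := hfac d hdδ
        rwa [hdd] at this
      rw [hed']
      nlinarith
    · have h5 : rMarg r d {d} + rMarg r d (restrictP ε.1 d) ≤ rMarg r e {e} :=
        rMarg_add_le hr0 (fun h => hdd h.symm) himp1 himp2
      have h6 : η ≤ rMarg r d {d} := by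
        rw [hηprod]
        exact prod_le_single h01 h11 hdδ
      have h7 := hfac d hdδ
      linarith
  have hreachε : ∃ k, 0 < (TulMat r ^ k) δtop ε := by
    obtain ⟨k, hk⟩ := hreach
    exact ⟨k + 1, Tul_pow_trans hr0 hk (by rw [pow_one]; exact hpos)⟩
  set σe : PT n := ⟨sigmaPart e, sigma_isPartition hene⟩ with hσdef
  obtain ⟨m, hm⟩ := reach_sigma hr0 hr1 hsep n ε e heε hre_pos (Nat.le_add_left n _) σe rfl
  have hreachσ : ∃ k, 0 < (TulMat r ^ k) δtop σe := by
    obtain ⟨k, hk⟩ := hreachε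
    exact ⟨k + m, Tul_pow_trans hr0 hk hm⟩
  have hσmin : σe ≠ δmin := by
    intro h
    exact sigma_ne_singletons he2 (by rw [← hδmin, ← h])
  have hle : TulMat r σe σe ≤ η := by
    rw [hη]
    exact Finset.le_sup' (f := fun δ' : PT n => TulMat r δ' δ')
      (Finset.mem_filter.mpr ⟨Finset.mem_univ σe, hreachσ, hσmin⟩)
  rw [sigma_diag hr1 he2 rfl] at hle
  linarith

end Aux5


/-- pre-absorption structure of maximal-sojourn states.  Assume the coarsest
common refinement of the partitions with positive recombination probability is the singleton
partition `δmin` and `r_{δmin} ≠ 1`.  If `η` is the maximal sojourn probability of the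
unlabelled partitioning process over the non-absorbing states reachable from the one-block
partition, then every reachable state `δ ≠ δmin` with `T^{ul}_{δδ} = η` satisfies
`T^{ul}_{δδ} + T^{ul}_{δ,δmin} = 1`. -/
theorem maximal_sojourn_preabsorption {n : ℕ}
    (r : Finset (Finset (Fin n)) → ℝ) (hr0 : ∀ P, 0 ≤ r P)
    (hr1 : ∑ P ∈ partitionsOf (Finset.univ : Finset (Fin n)), r P = 1)
    (hsep : ∀ i j : Fin n, i ≠ j → ∃ P ∈ partitionsOf (Finset.univ : Finset (Fin n)),
      0 < r P ∧ ∀ d ∈ P, ¬(i ∈ d ∧ j ∈ d))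
    (hrmin : r (singletonsPartition n) ≠ 1)
    (δtop δmin : PT n)
    (hδtop : δtop.1 = {(Finset.univ : Finset (Fin n))})
    (hδmin : δmin.1 = singletonsPartition n)
    (hne : (Finset.univ.filter fun δ : PT n =>
        (∃ k : ℕ, 0 < (TulMat r ^ k) δtop δ) ∧ δ ≠ δmin).Nonempty)
    (η : ℝ)
    (hη : η = (Finset.univ.filter fun δ : PT n =>
        (∃ k : ℕ, 0 < (TulMat r ^ k) δtop δ) ∧ δ ≠ δmin).sup' hne fun δ => TulMat r δ δ) :
    ∀ δ : PT n, (∃ k : ℕ, 0 < (TulMat r ^ k) δtop δ) → δ ≠ δmin → TulMat r δ δ = η →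
      TulMat r δ δ + TulMat r δ δmin = 1 := by
  intro δ hreach hδne hmax
  have hstep1 := no_intermediate hr0 hr1 hsep δtop δmin hδmin hne η hη δ hreach hδne hmax
  set A := (partitionsOf (Finset.univ : Finset (Fin n))).filter
    (fun P => ∀ d ∈ δ.1, restrictP P d = {d}) with hA
  set B := (partitionsOf (Finset.univ : Finset (Fin n))).filter
    (fun P => ∀ d ∈ δ.1, restrictP P d = d.image fun i => ({i} : Finset (Fin n))) with hB
  have hdich : ∀ P ∈ partitionsOf (Finset.univ : Finset (Fin n)), r P ≠ 0 →
      (∀ d ∈ δ.1, restrictP P d = {d}) ∨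
      (∀ d ∈ δ.1, restrictP P d = d.image fun i => ({i} : Finset (Fin n))) := by
    intro P hP hrP
    have hrPpos : 0 < r P := (hr0 P).lt_of_ne (Ne.symm hrP)
    have hfpart : ∀ d ∈ δ.1, IsPartition d (restrictP P d) := fun d _ =>
      restrict_isPartition (mem_partitionsOf.mp hP) (Finset.subset_univ d)
    set Q : PT n := ⟨δ.1.biUnion (fun d => restrictP P d), glue_isPartition δ.2 hfpart⟩
      with hQ
    have hQd : ∀ d ∈ δ.1, restrictP Q.1 d = restrictP P d := fun d hd => by
      rw [hQ]
      exact glue_restrict δ.2 hfpart hd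
    have hpos : 0 < TulMat r δ Q := by
      apply Tul_pos_intro (glue_refines hfpart)
      intro d hd
      rw [hQd d hd]
      exact lt_of_lt_of_le hrPpos (rMarg_mem_le hr0 hP d)
    rcases hstep1 Q hpos with h | h
    · left
      intro d hd
      rw [← hQd d hd, h]
      exact restrict_self δ.2.2.1 hd (δ.2.1 d hd)
    · right
      intro d hd
      rw [← hQd d hd, h, hδmin]
      exact restrict_singletonsPartition
  obtain ⟨d₀, hd₀δ, hd₀2⟩ := exists_nonsingleton δ.2
    (fun h => hδne (Subtype.ext (h.trans hδmin.symm)))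
  set α := ∑ P ∈ A, r P with hα
  set β := ∑ P ∈ B, r P with hβ
  have himgne : ∀ d : Finset (Fin n), 2 ≤ d.card →
      d.image (fun i => ({i} : Finset (Fin n))) ≠ {d} := by
    intro d hd h
    obtain ⟨i, hi, j, hj, hij⟩ := Finset.one_lt_card.mp hd
    have hmem : ({i} : Finset (Fin n)) ∈ d.image (fun i => ({i} : Finset (Fin n))) :=
      Finset.mem_image_of_mem _ hi
    rw [h, Finset.mem_singleton] at hmem
    rw [← hmem] at hj
    rw [Finset.mem_singleton] at hj
    exact hij hj.symm
  have hABdisj : Disjoint A B := by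
    rw [Finset.disjoint_left]
    intro P hPA hPB
    have h1 := (Finset.mem_filter.mp hPA).2 d₀ hd₀δ
    have h2 := (Finset.mem_filter.mp hPB).2 d₀ hd₀δ
    exact himgne d₀ hd₀2 (by rw [← h2, h1])
  have hαβ : α + β = 1 := by
    rw [hα, hβ, ← Finset.sum_union hABdisj, ← hr1]
    apply Finset.sum_subset
    · intro P hP
      rcases Finset.mem_union.mp hP with h | h
      · exact Finset.filter_subset _ _ h
      · exact Finset.filter_subset _ _ h
    · intro P hP hPnot
      by_contra hrP
      rcases hdich P hP hrP with h | h
      · exact hPnot (Finset.mem_union_left _ (Finset.mem_filter.mpr ⟨hP, h⟩))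
      · exact hPnot (Finset.mem_union_right _ (Finset.mem_filter.mpr ⟨hP, h⟩))
  have hαd : ∀ d ∈ δ.1, 2 ≤ d.card → rMarg r d {d} = α := by
    intro d hd hd2
    rw [hα, rMarg]
    refine (Finset.sum_subset ?_ ?_).symm
    · intro P hP
      obtain ⟨hP1, hP2⟩ := Finset.mem_filter.mp hP
      exact Finset.mem_filter.mpr ⟨hP1, hP2 d hd⟩
    · intro P hP hPnot
      obtain ⟨hP1, hP2⟩ := Finset.mem_filter.mp hP
      by_contra hrP
      rcases hdich P hP1 hrP with h | h
      · exact hPnot (Finset.mem_filter.mpr ⟨hP1, h⟩)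
      · exact himgne d hd2 (by rw [← h d hd, hP2])
  have hβd : ∀ d ∈ δ.1, 2 ≤ d.card →
      rMarg r d (d.image fun i => ({i} : Finset (Fin n))) = β := by
    intro d hd hd2
    rw [hβ, rMarg]
    refine (Finset.sum_subset ?_ ?_).symm
    · intro P hP
      obtain ⟨hP1, hP2⟩ := Finset.mem_filter.mp hP
      exact Finset.mem_filter.mpr ⟨hP1, hP2 d hd⟩
    · intro P hP hPnot
      obtain ⟨hP1, hP2⟩ := Finset.mem_filter.mp hP
      by_contra hrP
      rcases hdich P hP1 hrP with h | h
      · exact himgne d hd2 (by rw [← hP2, h d hd])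
      · exact hPnot (Finset.mem_filter.mpr ⟨hP1, h⟩)
  set k := (δ.1.filter (fun d => 2 ≤ d.card)).card with hk
  have hk1 : 1 ≤ k := Finset.card_pos.mpr ⟨d₀, Finset.mem_filter.mpr ⟨hd₀δ, hd₀2⟩⟩
  have hTδδ : TulMat r δ δ = α ^ k := by
    rw [Tul_diag]
    rw [← Finset.prod_filter_mul_prod_filter_not δ.1 (fun d => 2 ≤ d.card)]
    have h1 : ∏ d ∈ δ.1.filter (fun d => 2 ≤ d.card), rMarg r d {d} = α ^ k := by
      rw [Finset.prod_congr rfl (fun d hd => hαd d (Finset.mem_filter.mp hd).1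
        (Finset.mem_filter.mp hd).2), Finset.prod_const, hk]
    have h2 : ∏ d ∈ δ.1.filter (fun d => ¬ 2 ≤ d.card), rMarg r d {d} = 1 := by
      apply Finset.prod_eq_one
      intro d hd
      obtain ⟨hdδ', hd1⟩ := Finset.mem_filter.mp hd
      have hc1 : d.card = 1 := by
        have := Finset.card_pos.mpr (δ.2.1 d hdδ')
        omega
      exact rMarg_singleton hr1 hc1
    rw [h1, h2, mul_one]
  have hTδmin : TulMat r δ δmin = β ^ k := by
    have hrefmin : RefinesP δmin.1 δ.1 := hδmin ▸ singletons_refines δ.2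
    rw [TulMat, TulEnt, if_pos hrefmin]
    have heq : ∀ d ∈ δ.1, restrictP δmin.1 d =
        d.image fun i => ({i} : Finset (Fin n)) := fun d _ => by
      rw [hδmin]
      exact restrict_singletonsPartition
    rw [Finset.prod_congr rfl (fun d hd => by rw [heq d hd])]
    rw [← Finset.prod_filter_mul_prod_filter_not δ.1 (fun d => 2 ≤ d.card)]
    have h1 : ∏ d ∈ δ.1.filter (fun d => 2 ≤ d.card),
        rMarg r d (d.image fun i => ({i} : Finset (Fin n))) = β ^ k := by
      rw [Finset.prod_congr rfl (fun d hd => hβd d (Finset.mem_filter.mp hd).1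
        (Finset.mem_filter.mp hd).2), Finset.prod_const, hk]
    have h2 : ∏ d ∈ δ.1.filter (fun d => ¬ 2 ≤ d.card),
        rMarg r d (d.image fun i => ({i} : Finset (Fin n))) = 1 := by
      apply Finset.prod_eq_one
      intro d hd
      obtain ⟨hdδ', hd1⟩ := Finset.mem_filter.mp hd
      have hc1 : d.card = 1 := by
        have := Finset.card_pos.mpr (δ.2.1 d hdδ')
        omega
      obtain ⟨i, rfl⟩ := Finset.card_eq_one.mp hc1
      rw [Finset.image_singleton]
      exact rMarg_singleton hr1 (Finset.card_singleton i)
    rw [h1, h2, mul_one]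
  rw [hTδδ, hTδmin]
  rcases eq_or_lt_of_le hk1 with hk1' | hk2
  · rw [← hk1', pow_one, pow_one]
    exact hαβ
  · by_cases hα0 : α = 0
    · have hβ1 : β = 1 := by linarith
      rw [hα0, hβ1, zero_pow (by omega), one_pow, zero_add]
    · by_cases hβ0 : β = 0
      · have hα1 : α = 1 := by linarith
        rw [hα1, hβ0, zero_pow (by omega), one_pow, add_zero]
      · exfalso
        have hαpos : 0 < α :=
          ((Finset.sum_nonneg fun P _ => hr0 P).lt_of_ne (Ne.symm hα0))
        have hβpos : 0 < β :=
          ((Finset.sum_nonneg fun P _ => hr0 P).lt_of_ne (Ne.symm hβ0))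
        obtain ⟨d₂, hd₂, hd₂ne⟩ := Finset.exists_mem_ne hk2 d₀
        obtain ⟨hd₂δ, hd₂2⟩ := Finset.mem_filter.mp hd₂
        have hd₀ne : d₀.Nonempty := Finset.card_pos.mp (by omega)
        set σ0 : PT n := ⟨sigmaPart d₀, sigma_isPartition hd₀ne⟩ with hσ0
        have hpos : 0 < TulMat r δ σ0 := by
          apply Tul_pos_intro
          · intro b hb
            rcases mem_sigmaPart.mp hb with h' | ⟨i, hi, h'⟩
            · exact ⟨d₀, hd₀δ, fun x hx => h' ▸ hx⟩
            · subst h'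
              have : i ∈ δ.1.sup id := by rw [δ.2.2.2]; exact Finset.mem_univ i
              obtain ⟨c, hc, hic⟩ := Finset.mem_sup.mp this
              simp only [id_eq] at hic
              exact ⟨c, hc, Finset.singleton_subset_iff.mpr hic⟩
          · intro d hd
            by_cases hdd₀ : d = d₀
            · rw [hdd₀]
              rw [show restrictP σ0.1 d₀ = {d₀} from sigma_restrict_self hd₀ne]
              rw [hαd d₀ hd₀δ hd₀2]
              exact hαpos
            · have hdisj0 : Disjoint d₀ d :=
                δ.2.2.1 d₀ hd₀δ d hd (fun h => hdd₀ h.symm)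
              rw [show restrictP σ0.1 d = d.image (fun i => ({i} : Finset (Fin n)))
                from sigma_restrict_other hdisj0]
              by_cases hd2 : 2 ≤ d.card
              · rw [hβd d hd hd2]
                exact hβpos
              · have hc1 : d.card = 1 := by
                  have := Finset.card_pos.mpr (δ.2.1 d hd)
                  omega
                obtain ⟨i, rfl⟩ := Finset.card_eq_one.mp hc1
                rw [Finset.image_singleton]
                rw [rMarg_singleton hr1 (Finset.card_singleton i)]
                norm_num
        rcases hstep1 σ0 hpos with h | h
        · have hd₂σ : d₂ ∈ sigmaPart d₀ := by
            have hval : σ0.1 = δ.1 := congrArg Subtype.val h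
            rw [← hval] at hd₂δ
            exact hd₂δ
          rcases mem_sigmaPart.mp hd₂σ with h' | ⟨i, -, h'⟩
          · exact hd₂ne h'
          · rw [h'] at hd₂2
            simp at hd₂2
        · exact sigma_ne_singletons hd₀2 ((congrArg Subtype.val h).trans hδmin)
end

section
/- Tail lower bound via a maximal-sojourn state: if there exists t_0 with P(τ_F = t_0) > 0, where τ_F is the first hitting time of the set F of states with maximal sojourn probability η, and every state in F either stays put (probability η) or is absorbed in one step, then there is c > 0 such that P(τ > t) ≥ c η^t for all t ∈ ℕ, where τ is the absorption time. -/
open scoped Classical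

/-- Probability of a finite path `x_0, …, x_t` for a Markov chain with transition matrix `T`
and initial distribution `π`. -/
noncomputable def pathProb {S : Type*} (T : Matrix S S ℝ) (π : S → ℝ) {t : ℕ}
    (x : Fin (t + 1) → S) : ℝ :=
  π (x 0) * ∏ i : Fin t, T (x i.castSucc) (x i.succ)

/-- `P(τ_F = t₀)`: the probability that the chain hits the set `F` for the first time at
time `t₀`. -/
noncomputable def firstHitSetProb {S : Type*} [Fintype S] (T : Matrix S S ℝ) (π : S → ℝ)
    (F : Finset S) (t₀ : ℕ) : ℝ :=
  ∑ x : Fin (t₀ + 1) → S,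
    if x (Fin.last t₀) ∈ F ∧ (∀ i : Fin (t₀ + 1), i ≠ Fin.last t₀ → x i ∉ F) then
      pathProb T π x else 0

/-- Distribution at time `t`. -/
noncomputable def distAt {S : Type*} [Fintype S] [DecidableEq S] (T : Matrix S S ℝ) (π : S → ℝ)
    (t : ℕ) (a : S) : ℝ :=
  ∑ b, π b * (T ^ t) b a

lemma pow_entry_nonneg {S : Type*} [Fintype S] [DecidableEq S] {T : Matrix S S ℝ}
    (hT0 : ∀ a b, 0 ≤ T a b) : ∀ (t : ℕ) (a b : S), 0 ≤ (T ^ t) a b := by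
  intro t
  induction t with
  | zero =>
    intro a b
    simp only [pow_zero, Matrix.one_apply]
    split <;> norm_num
  | succ t ih =>
    intro a b
    rw [pow_succ, Matrix.mul_apply]
    exact Finset.sum_nonneg fun c _ => mul_nonneg (ih a c) (hT0 c b)

lemma distAt_nonneg {S : Type*} [Fintype S] [DecidableEq S] {T : Matrix S S ℝ} {π : S → ℝ}
    (hT0 : ∀ a b, 0 ≤ T a b) (hπ0 : ∀ a, 0 ≤ π a) (t : ℕ) (a : S) :
    0 ≤ distAt T π t a :=
  Finset.sum_nonneg fun b _ => mul_nonneg (hπ0 b) (pow_entry_nonneg hT0 t b a)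

lemma distAt_succ {S : Type*} [Fintype S] [DecidableEq S] (T : Matrix S S ℝ) (π : S → ℝ)
    (t : ℕ) (a : S) :
    distAt T π (t + 1) a = ∑ c, distAt T π t c * T c a := by
  unfold distAt
  simp only [pow_succ, Matrix.mul_apply, Finset.mul_sum, Finset.sum_mul]
  rw [Finset.sum_comm]
  congr 1
  ext c
  congr 1
  ext b
  ring

lemma pathProb_le_distAt {S : Type*} [Fintype S] [DecidableEq S] {T : Matrix S S ℝ} {π : S → ℝ}
    (hT0 : ∀ a b, 0 ≤ T a b) (hπ0 : ∀ a, 0 ≤ π a) :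
    ∀ (t : ℕ) (y : Fin (t + 1) → S), pathProb T π y ≤ distAt T π t (y (Fin.last t)) := by
  intro t
  induction t with
  | zero =>
    intro y
    have : distAt T π 0 (y (Fin.last 0)) = π (y (Fin.last 0)) := by
      unfold distAt
      simp [Matrix.one_apply]
    rw [this]
    have h0 : (Fin.last 0 : Fin 1) = 0 := rfl
    simp [pathProb, h0]
  | succ t ih =>
    intro y
    set z : Fin (t + 1) → S := fun i => y i.castSucc with hz
    have hprod : pathProb T π y = pathProb T π z * T (z (Fin.last t)) (y (Fin.last (t + 1))) := by
      unfold pathProb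
      rw [Fin.prod_univ_castSucc]
      have h1 : ∀ i : Fin t,
          T (y i.castSucc.castSucc) (y i.castSucc.succ) = T (z i.castSucc) (z i.succ) := by
        intro i
        have : i.castSucc.succ = i.succ.castSucc := (Fin.succ_castSucc i).symm
        rw [this]
      have h2 : z 0 = y 0 := by simp [hz]
      have h3 : (Fin.last t).succ = Fin.last (t + 1) := rfl
      simp only [h2, h3]
      rw [Finset.prod_congr rfl (fun i _ => h1 i)]
      ring_nf
      rfl
    rw [hprod]
    have hstep : pathProb T π z * T (z (Fin.last t)) (y (Fin.last (t + 1))) ≤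
        distAt T π t (z (Fin.last t)) * T (z (Fin.last t)) (y (Fin.last (t + 1))) :=
      mul_le_mul_of_nonneg_right (ih z) (hT0 _ _)
    refine hstep.trans ?_
    rw [distAt_succ]
    exact Finset.single_le_sum
      (f := fun c => distAt T π t c * T c (y (Fin.last (t + 1))))
      (fun c _ => mul_nonneg (distAt_nonneg hT0 hπ0 t c) (hT0 _ _))
      (Finset.mem_univ _)

/-- tail lower bound via a maximal-sojourn state.  For a downward-moving Markov
chain on a finite poset with unique absorbing state `δmin`, if every state of `F` either stays
put (probability `η`) or is absorbed in one step, and `P(τ_F = t₀) > 0` for some `t₀`, then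
there is `c > 0` with `P(τ > t) ≥ c η^t` for all `t` (noting `τ > t ↔ X_t ≠ δmin`). -/
theorem tail_lower_bound {S : Type*} [Fintype S] [DecidableEq S] [PartialOrder S]
    (T : Matrix S S ℝ)
    (hT0 : ∀ a b, 0 ≤ T a b) (hT1 : ∀ a, ∑ b, T a b = 1)
    (hdown : ∀ a b, T a b ≠ 0 → b ≤ a)
    (δmin : S) (habs : ∀ a, T a a = 1 ↔ a = δmin)
    (F : Finset S) (hFmin : δmin ∉ F)
    (η : ℝ) (hF : ∀ δ ∈ F, T δ δ = η ∧ T δ δmin = 1 - η)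
    (π : S → ℝ) (hπ0 : ∀ a, 0 ≤ π a) (hπ1 : ∑ a, π a = 1)
    (t₀ : ℕ) (h0 : 0 < firstHitSetProb T π F t₀) :
    ∃ c > (0 : ℝ), ∀ t : ℕ,
      c * η ^ t ≤ ∑ a ∈ Finset.univ.filter (fun a => a ≠ δmin), ∑ b, π b * (T ^ t) b a := by
  classical
  -- T entries are ≤ 1
  have hTle1 : ∀ a b, T a b ≤ 1 := by
    intro a b
    calc T a b ≤ ∑ c, T a c :=
          Finset.single_le_sum (fun c _ => hT0 a c) (Finset.mem_univ b)
      _ = 1 := hT1 a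
  -- δmin is absorbing: T δmin b = 0 for b ≠ δmin
  have habs0 : ∀ b, b ≠ δmin → T δmin b = 0 := by
    intro b hb
    have h11 : T δmin δmin = 1 := (habs δmin).2 rfl
    have hsum : ∑ c ∈ Finset.univ.erase δmin, T δmin c = 0 := by
      have := Finset.add_sum_erase Finset.univ (T δmin) (Finset.mem_univ δmin)
      rw [hT1 δmin, h11] at this
      linarith
    have := (Finset.sum_eq_zero_iff_of_nonneg (fun c _ => hT0 δmin c)).1 hsum b
      (Finset.mem_erase.2 ⟨hb, Finset.mem_univ b⟩)
    exact this
  -- extract a positive-probability path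
  have hex : ∃ x : Fin (t₀ + 1) → S,
      (x (Fin.last t₀) ∈ F ∧ (∀ i : Fin (t₀ + 1), i ≠ Fin.last t₀ → x i ∉ F)) ∧
      0 < pathProb T π x := by
    by_contra hcon
    push_neg at hcon
    have : firstHitSetProb T π F t₀ ≤ 0 := by
      apply Finset.sum_nonpos
      intro x _
      split
      · next hcond => exact hcon x hcond
      · exact le_refl 0
    linarith
  obtain ⟨x, ⟨hxF, hxfirst⟩, hp⟩ := hex
  set p : ℝ := pathProb T π x with hpdef
  set δ : S := x (Fin.last t₀) with hδ
  have hδF : δ ∈ F := hxF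
  have hδmin : δ ≠ δmin := fun h => hFmin (h ▸ hδF)
  have hη : T δ δ = η := (hF δ hδF).1
  have hη0 : 0 ≤ η := hη ▸ hT0 δ δ
  have hη1 : η ≤ 1 := hη ▸ hTle1 δ δ
  -- each transition along the path is nonzero
  have hfac : ∀ i : Fin t₀, T (x i.castSucc) (x i.succ) ≠ 0 := by
    intro i
    have hprodne : (∏ j : Fin t₀, T (x j.castSucc) (x j.succ)) ≠ 0 := by
      intro h
      have hp' : (0 : ℝ) < π (x 0) * ∏ j : Fin t₀, T (x j.castSucc) (x j.succ) := hp
      rw [h, mul_zero] at hp'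
      exact lt_irrefl 0 hp'
    exact Finset.prod_ne_zero_iff.1 hprodne i (Finset.mem_univ i)
  -- the path never visits δmin
  have hxne : ∀ j : ℕ, ∀ hj : j ≤ t₀, x ⟨j, Nat.lt_succ_of_le hj⟩ ≠ δmin := by
    -- forward propagation: once at δmin, always at δmin
    have hfwd : ∀ d j (hj : j + d ≤ t₀), x ⟨j, by omega⟩ = δmin →
        x ⟨j + d, by omega⟩ = δmin := by
      intro d
      induction d with
      | zero => intro j hj h; exact h
      | succ d ih =>
        intro j hj h
        have hj1 : (j + 1) + d ≤ t₀ := by omega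
        have hstep : x ⟨j + 1, by omega⟩ = δmin := by
          have hfacj : T (x ⟨j, by omega⟩) (x ⟨j + 1, by omega⟩) ≠ 0 := by
            have := hfac ⟨j, by omega⟩
            have hcs : (⟨j, by omega⟩ : Fin t₀).castSucc = (⟨j, by omega⟩ : Fin (t₀ + 1)) := rfl
            have hsc : (⟨j, by omega⟩ : Fin t₀).succ = (⟨j + 1, by omega⟩ : Fin (t₀ + 1)) := rfl
            rwa [hcs, hsc] at this
          rw [h] at hfacj
          by_contra hne
          exact hfacj (habs0 _ hne)
        have := ih (j + 1) hj1 hstep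
        have heq : (⟨j + (d + 1), by omega⟩ : Fin (t₀ + 1)) = ⟨j + 1 + d, by omega⟩ :=
          Fin.mk_eq_mk.2 (by omega)
        rw [heq]
        exact this
    intro j hj hcon
    have := hfwd (t₀ - j) j (by omega) hcon
    have hlast : x ⟨j + (t₀ - j), by omega⟩ = x (Fin.last t₀) := by
      congr 1
      ext
      simp
      omega
    rw [hlast] at this
    exact hδmin this
  -- Claim A: for t ≤ t₀, p ≤ distAt T π t (x ⟨t⟩)
  have hA : ∀ t (ht : t ≤ t₀), p ≤ distAt T π t (x ⟨t, Nat.lt_succ_of_le ht⟩) := by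
    intro t ht
    set y : Fin (t + 1) → S := fun i => x (Fin.castLE (by omega) i) with hy
    have hyle : pathProb T π y ≤ distAt T π t (y (Fin.last t)) :=
      pathProb_le_distAt hT0 hπ0 t y
    have hylast : y (Fin.last t) = x ⟨t, Nat.lt_succ_of_le ht⟩ := rfl
    rw [hylast] at hyle
    refine le_trans ?_ hyle
    -- p ≤ pathProb y : the prefix of the path has larger probability
    show π (x 0) * ∏ i : Fin t₀, T (x i.castSucc) (x i.succ) ≤
      π (y 0) * ∏ i : Fin t, T (y i.castSucc) (y i.succ)
    have hy0 : y 0 = x 0 := rfl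
    rw [hy0]
    apply mul_le_mul_of_nonneg_left _ (hπ0 (x 0))
    -- compare products via ranges
    set g : ℕ → ℝ := fun i =>
      if h : i < t₀ then T (x ⟨i, by omega⟩) (x ⟨i + 1, by omega⟩) else 1 with hg
    have hg01 : ∀ i, 0 ≤ g i ∧ g i ≤ 1 := by
      intro i
      simp only [hg]
      split
      · exact ⟨hT0 _ _, hTle1 _ _⟩
      · exact ⟨zero_le_one, le_refl 1⟩
    have hfull : (∏ i : Fin t₀, T (x i.castSucc) (x i.succ)) = ∏ i ∈ Finset.range t₀, g i := by
      rw [Finset.prod_range fun i => g i]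
      apply Finset.prod_congr rfl
      intro i _
      simp only [hg]
      rw [dif_pos i.isLt]
      rfl
    have hpref : (∏ i : Fin t, T (y i.castSucc) (y i.succ)) = ∏ i ∈ Finset.range t, g i := by
      rw [Finset.prod_range fun i => g i]
      apply Finset.prod_congr rfl
      intro i _
      simp only [hg]
      rw [dif_pos (by omega : (i : ℕ) < t₀)]
      rfl
    rw [hfull, hpref]
    have hsplit : (∏ i ∈ Finset.range t₀, g i) =
        (∏ i ∈ Finset.range t, g i) * ∏ i ∈ Finset.Ico t t₀, g i := by
      simp only [Finset.range_eq_Ico]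
      exact (Finset.prod_Ico_consecutive g (Nat.zero_le t) ht).symm
    rw [hsplit]
    have h1 : (∏ i ∈ Finset.Ico t t₀, g i) ≤ 1 :=
      Finset.prod_le_one (fun i _ => (hg01 i).1) (fun i _ => (hg01 i).2)
    have h2 : 0 ≤ ∏ i ∈ Finset.range t, g i :=
      Finset.prod_nonneg (fun i _ => (hg01 i).1)
    calc (∏ i ∈ Finset.range t, g i) * ∏ i ∈ Finset.Ico t t₀, g i
        ≤ (∏ i ∈ Finset.range t, g i) * 1 := mul_le_mul_of_nonneg_left h1 h2
      _ = ∏ i ∈ Finset.range t, g i := mul_one _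
  -- Claim B: for s, p * η ^ s ≤ distAt T π (t₀ + s) δ
  have hB : ∀ s : ℕ, p * η ^ s ≤ distAt T π (t₀ + s) δ := by
    intro s
    induction s with
    | zero =>
      simp only [pow_zero, mul_one, Nat.add_zero]
      have := hA t₀ (le_refl t₀)
      have hlast : (⟨t₀, Nat.lt_succ_of_le (le_refl t₀)⟩ : Fin (t₀ + 1)) = Fin.last t₀ := rfl
      rwa [hlast] at this
    | succ s ih =>
      have : t₀ + (s + 1) = (t₀ + s) + 1 := by omega
      rw [this, distAt_succ]
      have hstep : distAt T π (t₀ + s) δ * η ≤ ∑ c, distAt T π (t₀ + s) c * T c δ := by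
        rw [← hη]
        exact Finset.single_le_sum
          (f := fun c => distAt T π (t₀ + s) c * T c δ)
          (fun c _ => mul_nonneg (distAt_nonneg hT0 hπ0 _ c) (hT0 _ _))
          (Finset.mem_univ δ)
      calc p * η ^ (s + 1) = (p * η ^ s) * η := by ring
        _ ≤ distAt T π (t₀ + s) δ * η := mul_le_mul_of_nonneg_right ih hη0
        _ ≤ _ := hstep
  -- the target sum dominates any single distAt at a state ≠ δmin
  have hdom : ∀ (t : ℕ) (a : S), a ≠ δmin →
      distAt T π t a ≤ ∑ a ∈ Finset.univ.filter (fun a => a ≠ δmin), ∑ b, π b * (T ^ t) b a := by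
    intro t a ha
    have hmem : a ∈ Finset.univ.filter (fun a => a ≠ δmin) := by
      simp [ha]
    have := Finset.single_le_sum
      (f := fun a => distAt T π t a)
      (fun c _ => distAt_nonneg hT0 hπ0 t c) hmem
    exact this.trans_eq (Finset.sum_congr rfl fun _ _ => rfl)
  have hsum_nonneg : ∀ t : ℕ,
      0 ≤ ∑ a ∈ Finset.univ.filter (fun a => a ≠ δmin), ∑ b, π b * (T ^ t) b a := by
    intro t
    exact Finset.sum_nonneg fun a _ =>
      Finset.sum_nonneg fun b _ => mul_nonneg (hπ0 b) (pow_entry_nonneg hT0 t b a)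
  by_cases hη0' : η = 0
  · -- degenerate case: η = 0, take c = p
    refine ⟨p, hp, fun t => ?_⟩
    rcases Nat.eq_zero_or_pos t with ht | ht
    · subst ht
      have hgoal : p * η ^ (0 : ℕ) = p := by norm_num
      rw [hgoal]
      have h1 := hA 0 (Nat.zero_le t₀)
      have h2 := hdom 0 (x ⟨0, Nat.succ_pos t₀⟩) (hxne 0 (Nat.zero_le t₀))
      linarith
    · rw [hη0', zero_pow (by omega : t ≠ 0), mul_zero]
      exact hsum_nonneg t
  · -- main case: η > 0, take c = p * η ^ t₀
    have hηpos : 0 < η := lt_of_le_of_ne hη0 (Ne.symm hη0')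
    refine ⟨p * η ^ t₀, mul_pos hp (pow_pos hηpos t₀), fun t => ?_⟩
    rcases le_or_gt t t₀ with ht | ht
    · have h1 := hA t ht
      have h2 := hdom t (x ⟨t, Nat.lt_succ_of_le ht⟩) (hxne t ht)
      have h3 : p * η ^ t₀ * η ^ t ≤ p := by
        have : η ^ t₀ * η ^ t ≤ 1 := by
          rw [← pow_add]
          exact pow_le_one₀ hη0 hη1
        nlinarith
      linarith
    · obtain ⟨s, rfl⟩ : ∃ s, t = t₀ + s := ⟨t - t₀, by omega⟩
      have h1 := hB s
      have h2 := hdom (t₀ + s) δ hδmin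
      have h3 : p * η ^ t₀ * η ^ (t₀ + s) ≤ p * η ^ s := by
        have : η ^ t₀ * η ^ (t₀ + s) ≤ η ^ s := by
          rw [← pow_add]
          exact pow_le_pow_of_le_one hη0 hη1 (by omega)
        nlinarith
      linarith
end

section
/- Tail upper bound off the maximal-sojourn states: let η' := max over non-absorbing states δ ∉ F of the sojourn probability T^{ul}_{δδ}. Then for every η'' > η' there is C > 0 with P(τ ∧ τ_F > t) ≤ C (η'')^t for all t, where τ is the absorption time and τ_F the hitting time of F; consequently, combining with the lower bound P(τ > t) ≥ c η^t (with η > η'), there exists γ ∈ (0,1) such that P(τ_F > γt | τ > t) → 0 as t → ∞. -/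
open scoped Classical

/-- `P(τ ∧ τ_F > t)`: the probability that by time `t` the chain has neither been absorbed in
`δmin` nor hit the set `F`. -/
noncomputable def avoidProb {S : Type*} [Fintype S] (T : Matrix S S ℝ) (π : S → ℝ)
    (δmin : S) (F : Finset S) (t : ℕ) : ℝ :=
  ∑ x : Fin (t + 1) → S,
    if (∀ i, x i ≠ δmin ∧ x i ∉ F) then pathProb T π x else 0

/-- `P(τ_F > γt, τ > t)`: the probability that the chain is not absorbed by time `t` and has not
hit `F` by time `γt`. -/
noncomputable def lateHitProb {S : Type*} [Fintype S] (T : Matrix S S ℝ) (π : S → ℝ)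
    (δmin : S) (F : Finset S) (γ : ℝ) (t : ℕ) : ℝ :=
  ∑ x : Fin (t + 1) → S,
    if (∀ i, x i ≠ δmin) ∧ (∀ i : Fin (t + 1), ((i : ℕ) : ℝ) ≤ γ * t → x i ∉ F) then
      pathProb T π x else 0

/-- `P(τ > t)` (equivalently `P(X_t ≠ δmin)`, since `δmin` is absorbing). -/
noncomputable def survivalProb {S : Type*} [Fintype S] [DecidableEq S] (T : Matrix S S ℝ)
    (π : S → ℝ) (δmin : S) (t : ℕ) : ℝ :=
  ∑ a ∈ Finset.univ.filter (fun a => a ≠ δmin), ∑ b, π b * (T ^ t) b a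

noncomputable def hProb {S : Type*} [Fintype S] (T : Matrix S S ℝ) (P : S → Prop)
    (a : S) (t : ℕ) : ℝ :=
  ∑ x : Fin (t + 1) → S,
    if (x 0 = a ∧ ∀ i, P (x i)) then ∏ i : Fin t, T (x i.castSucc) (x i.succ) else 0

lemma hProb_zero {S : Type*} [Fintype S] (T : Matrix S S ℝ) (P : S → Prop) (a : S) :
    hProb T P a 0 = if P a then 1 else 0 := by
  unfold hProb
  rw [Finset.sum_eq_single (fun _ : Fin 1 => a)]
  · by_cases h : P a <;> simp [h]
  · intro x _ hx
    rw [if_neg]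
    rintro ⟨h0, -⟩
    exact hx (funext fun i => by rw [Subsingleton.elim i 0, h0])
  · intro h; exact absurd (Finset.mem_univ _) h

lemma hProb_succ {S : Type*} [Fintype S] (T : Matrix S S ℝ) (P : S → Prop) (a : S) (t : ℕ) :
    hProb T P a (t + 1) = if P a then ∑ b, T a b * hProb T P b t else 0 := by
  have hbij : Function.Bijective
      (fun p : S × (Fin (t + 1) → S) => (Fin.cons p.1 p.2 : Fin (t + 2) → S)) := by
    refine Function.bijective_iff_has_inverse.mpr
      ⟨fun x => (x 0, fun i => x i.succ), fun p => ?_, fun x => ?_⟩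
    · exact Prod.ext (by simp) (funext fun i => by simp)
    · exact Fin.cons_self_tail x
  have key : hProb T P a (t + 1)
      = ∑ y : Fin (t + 1) → S, if (P a ∧ ∀ i, P (y i)) then
          T a (y 0) * ∏ i : Fin t, T (y i.castSucc) (y i.succ) else 0 := by
    unfold hProb
    rw [← Fintype.sum_bijective _ hbij _ _ (fun p => rfl)]
    rw [Fintype.sum_prod_type]
    have step : ∀ (b : S) (y : Fin (t + 1) → S),
        (if ((Fin.cons b y : Fin (t + 2) → S) 0 = a ∧
            ∀ i, P ((Fin.cons b y : Fin (t + 2) → S) i)) then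
          ∏ i : Fin (t + 1), T ((Fin.cons b y : Fin (t + 2) → S) i.castSucc)
            ((Fin.cons b y : Fin (t + 2) → S) i.succ) else 0)
        = if b = a then (if (P a ∧ ∀ i, P (y i)) then
            T a (y 0) * ∏ i : Fin t, T (y i.castSucc) (y i.succ) else 0) else 0 := by
      intro b y
      have hprod : (∏ i : Fin (t + 1), T ((Fin.cons b y : Fin (t + 2) → S) i.castSucc)
            ((Fin.cons b y : Fin (t + 2) → S) i.succ))
          = T b (y 0) * ∏ i : Fin t, T (y i.castSucc) (y i.succ) := by
        simp [Fin.prod_univ_succ, ← Fin.succ_castSucc]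
      rw [hprod]
      simp only [Fin.forall_fin_succ, Fin.cons_zero, Fin.cons_succ]
      by_cases hb : b = a
      · subst hb
        by_cases h1 : P b <;> by_cases h2 : ∀ i, P (y i) <;> simp [h1, h2]
      · simp [hb, fun (h : b = a) => hb h]
    calc (∑ b, ∑ y : Fin (t + 1) → S,
            if ((Fin.cons b y : Fin (t + 2) → S) 0 = a ∧
              ∀ i, P ((Fin.cons b y : Fin (t + 2) → S) i)) then
              ∏ i : Fin (t + 1), T ((Fin.cons b y : Fin (t + 2) → S) i.castSucc)
                ((Fin.cons b y : Fin (t + 2) → S) i.succ) else 0)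
        = ∑ b, ∑ y : Fin (t + 1) → S, if b = a then (if (P a ∧ ∀ i, P (y i)) then
              T a (y 0) * ∏ i : Fin t, T (y i.castSucc) (y i.succ) else 0) else 0 :=
          Finset.sum_congr rfl fun b _ => Finset.sum_congr rfl fun y _ => step b y
      _ = _ := by
          rw [Finset.sum_comm]
          exact Finset.sum_congr rfl fun y _ => Fintype.sum_ite_eq' a _
  rw [key]
  by_cases hPa : P a
  · simp only [hPa, if_pos, true_and]
    unfold hProb
    simp only [Finset.mul_sum]
    rw [Finset.sum_comm]
    refine Finset.sum_congr rfl fun y _ => ?_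
    have hb : ∀ b : S, T a b * (if (y 0 = b ∧ ∀ i, P (y i)) then
          ∏ i : Fin t, T (y i.castSucc) (y i.succ) else 0)
        = if y 0 = b then (if (∀ i, P (y i)) then
            T a b * ∏ i : Fin t, T (y i.castSucc) (y i.succ) else 0) else 0 := by
      intro b
      by_cases h0 : y 0 = b <;> by_cases h2 : ∀ i, P (y i) <;> simp [h0, h2]
    rw [Finset.sum_congr rfl fun b _ => hb b, Fintype.sum_ite_eq]
  · simp [hPa]

lemma hProb_bound {S : Type*} [Fintype S] [PartialOrder S] (T : Matrix S S ℝ)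
    (hT0 : ∀ a b, 0 ≤ T a b) (hT1 : ∀ a, ∑ b, T a b = 1)
    (hdown : ∀ a b, T a b ≠ 0 → b ≤ a)
    (P : S → Prop) (η' ε η'' : ℝ)
    (hdiag : ∀ a, P a → T a a ≤ η')
    (hε0 : 0 < ε) (hε1 : ε ≤ 1) (hsum : η' + ε ≤ η'') (hη'' : 0 < η'')
    (t : ℕ) (a : S) :
    hProb T P a t ≤ ε⁻¹ ^ (Finset.univ.filter (· < a)).card * η'' ^ t := by
  have hεinv : (1:ℝ) ≤ ε⁻¹ := (one_le_inv₀ hε0).mpr hε1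
  have hv1 : ∀ b : S, (1:ℝ) ≤ ε⁻¹ ^ (Finset.univ.filter (· < b)).card :=
    fun b => one_le_pow₀ hεinv
  have hv0 : ∀ b : S, (0:ℝ) ≤ ε⁻¹ ^ (Finset.univ.filter (· < b)).card :=
    fun b => le_trans zero_le_one (hv1 b)
  induction t generalizing a with
  | zero =>
    rw [hProb_zero]
    rw [pow_zero, mul_one]
    split_ifs
    · exact hv1 a
    · exact hv0 a
  | succ t ih =>
    rw [hProb_succ]
    by_cases hPa : P a
    · rw [if_pos hPa]
      set v : S → ℝ := fun b => ε⁻¹ ^ (Finset.univ.filter (· < b)).card with hvdef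
      have step1 : ∑ b, T a b * hProb T P b t ≤ (∑ b, T a b * v b) * η'' ^ t := by
        rw [Finset.sum_mul]
        refine Finset.sum_le_sum fun b _ => ?_
        rw [mul_assoc]
        exact mul_le_mul_of_nonneg_left (ih b) (hT0 a b)
      have step2 : ∑ b, T a b * v b ≤ (η' + ε) * v a := by
        rw [← Finset.add_sum_erase _ _ (Finset.mem_univ a)]
        have h1 : T a a * v a ≤ η' * v a :=
          mul_le_mul_of_nonneg_right (hdiag a hPa) (hv0 a)
        have h2 : ∑ b ∈ Finset.univ.erase a, T a b * v b ≤ ε * v a := by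
          have h3 : ∀ b ∈ Finset.univ.erase a, T a b * v b ≤ T a b * (ε * v a) := by
            intro b hb
            by_cases hTab : T a b = 0
            · simp [hTab]
            · have hba : b < a := lt_of_le_of_ne (hdown a b hTab) (Finset.mem_erase.mp hb).1
              have hr : (Finset.univ.filter (· < b)).card < (Finset.univ.filter (· < a)).card := by
                refine Finset.card_lt_card ⟨fun c hc => ?_, fun hss => ?_⟩
                · simp only [Finset.mem_filter, Finset.mem_univ, true_and] at hc ⊢
                  exact lt_trans hc hba
                · have := hss (Finset.mem_filter.mpr ⟨Finset.mem_univ b, hba⟩)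
                  simp only [Finset.mem_filter, Finset.mem_univ, true_and] at this
                  exact lt_irrefl b this
              have hvb : v b ≤ ε * v a := by
                have hcard : (Finset.univ.filter (· < b)).card ≤
                    (Finset.univ.filter (· < a)).card - 1 := Nat.le_sub_one_of_lt hr
                have h4 : v b ≤ ε⁻¹ ^ ((Finset.univ.filter (· < a)).card - 1) :=
                  pow_le_pow_right₀ hεinv hcard
                have h5 : ε * v a = ε⁻¹ ^ ((Finset.univ.filter (· < a)).card - 1) := by
                  have hpos : 1 ≤ (Finset.univ.filter (· < a)).card := Nat.one_le_iff_ne_zero.mpr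
                    (by omega)
                  rw [hvdef]
                  simp only
                  rw [← Nat.sub_add_cancel hpos, pow_succ]
                  field_simp
                  congr 1
                rw [h5]
                exact h4
              exact mul_le_mul_of_nonneg_left hvb (hT0 a b)
          calc ∑ b ∈ Finset.univ.erase a, T a b * v b
              ≤ ∑ b ∈ Finset.univ.erase a, T a b * (ε * v a) := Finset.sum_le_sum h3
            _ = (∑ b ∈ Finset.univ.erase a, T a b) * (ε * v a) := by rw [Finset.sum_mul]
            _ ≤ 1 * (ε * v a) := by
                refine mul_le_mul_of_nonneg_right ?_ (mul_nonneg hε0.le (hv0 a))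
                have := hT1 a
                rw [← Finset.add_sum_erase _ _ (Finset.mem_univ a)] at this
                nlinarith [hT0 a a]
            _ = ε * v a := one_mul _
        calc T a a * v a + ∑ b ∈ Finset.univ.erase a, T a b * v b
            ≤ η' * v a + ε * v a := add_le_add h1 h2
          _ = (η' + ε) * v a := by ring
      calc ∑ b, T a b * hProb T P b t ≤ (∑ b, T a b * v b) * η'' ^ t := step1
        _ ≤ ((η' + ε) * v a) * η'' ^ t :=
            mul_le_mul_of_nonneg_right step2 (pow_nonneg hη''.le t)
        _ ≤ (η'' * v a) * η'' ^ t :=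
            mul_le_mul_of_nonneg_right (mul_le_mul_of_nonneg_right hsum (hv0 a))
              (pow_nonneg hη''.le t)
        _ = v a * η'' ^ (t + 1) := by ring
    · rw [if_neg hPa]
      exact mul_nonneg (hv0 a) (pow_nonneg hη''.le _)

lemma pathProb_nonneg {S : Type*} (T : Matrix S S ℝ) (π : S → ℝ)
    (hT0 : ∀ a b, 0 ≤ T a b) (hπ0 : ∀ a, 0 ≤ π a) {t : ℕ} (x : Fin (t + 1) → S) :
    0 ≤ pathProb T π x :=
  mul_nonneg (hπ0 _) (Finset.prod_nonneg fun _ _ => hT0 _ _)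

lemma avoidProb_eq {S : Type*} [Fintype S] (T : Matrix S S ℝ) (π : S → ℝ)
    (δmin : S) (F : Finset S) (t : ℕ) :
    avoidProb T π δmin F t
      = ∑ a, π a * hProb T (fun b => b ≠ δmin ∧ b ∉ F) a t := by
  unfold avoidProb hProb pathProb
  simp only [Finset.mul_sum]
  rw [Finset.sum_comm]
  refine Finset.sum_congr rfl fun x _ => ?_
  by_cases h2 : ∀ i, x i ≠ δmin ∧ x i ∉ F <;>
    simp [h2, mul_ite, mul_zero, Finset.sum_ite_eq]

lemma marginal {S : Type*} [Fintype S] (T : Matrix S S ℝ) (hT1 : ∀ a, ∑ b, T a b = 1)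
    (π : S → ℝ) (s : ℕ) (f : (Fin (s + 1) → S) → ℝ) :
    ∀ t (hst : s ≤ t),
    (∑ x : Fin (t + 1) → S,
      f (fun i => x (Fin.castLE (Nat.succ_le_succ hst) i)) * pathProb T π x)
      = ∑ y : Fin (s + 1) → S, f y * pathProb T π y := by
  intro t hst
  induction t, hst using Nat.le_induction with
  | base =>
    refine Finset.sum_congr rfl fun x _ => ?_
    have : (fun i => x (Fin.castLE (Nat.succ_le_succ le_rfl) i)) = x :=
      funext fun i => congrArg x (Fin.ext rfl)
    rw [this]
  | succ t hst ih =>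
    have hbij : Function.Bijective
        (fun p : (Fin (t + 1) → S) × S => (Fin.snoc p.1 p.2 : Fin (t + 2) → S)) := by
      refine Function.bijective_iff_has_inverse.mpr
        ⟨fun x => (fun i => x i.castSucc, x (Fin.last (t + 1))), fun p => ?_, fun x => ?_⟩
      · exact Prod.ext (funext fun i => by simp) (by simp)
      · exact Fin.snoc_init_self x
    rw [← Fintype.sum_bijective _ hbij _ _ (fun p => rfl), Fintype.sum_prod_type]
    have step : ∀ (y : Fin (t + 1) → S) (z : S),
        f (fun i => (Fin.snoc y z : Fin (t + 2) → S)
            (Fin.castLE (Nat.succ_le_succ (le_trans hst (Nat.le_succ t))) i))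
          * pathProb T π (Fin.snoc y z : Fin (t + 2) → S)
        = (f (fun i => y (Fin.castLE (Nat.succ_le_succ hst) i)) * pathProb T π y)
            * T (y (Fin.last t)) z := by
      intro y z
      have hpre : (fun i => (Fin.snoc y z : Fin (t + 2) → S)
            (Fin.castLE (Nat.succ_le_succ (le_trans hst (Nat.le_succ t))) i))
          = fun i => y (Fin.castLE (Nat.succ_le_succ hst) i) := by
        funext i
        have : (Fin.castLE (Nat.succ_le_succ (le_trans hst (Nat.le_succ t))) i)
            = Fin.castSucc (Fin.castLE (Nat.succ_le_succ hst) i) := Fin.ext rfl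
        rw [this, Fin.snoc_castSucc]
      have hpath : pathProb T π (Fin.snoc y z : Fin (t + 2) → S)
          = pathProb T π y * T (y (Fin.last t)) z := by
        unfold pathProb
        have h0 : (Fin.snoc y z : Fin (t + 2) → S) 0 = y 0 := by
          have : (0 : Fin (t + 2)) = Fin.castSucc (0 : Fin (t + 1)) := rfl
          rw [this, Fin.snoc_castSucc]
        rw [h0, Fin.prod_univ_castSucc]
        have hlast : T ((Fin.snoc y z : Fin (t + 2) → S) (Fin.last t).castSucc)
            ((Fin.snoc y z : Fin (t + 2) → S) (Fin.last t).succ) = T (y (Fin.last t)) z := by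
          rw [Fin.snoc_castSucc, Fin.succ_last, Fin.snoc_last]
        have hmid : ∀ i : Fin t, T ((Fin.snoc y z : Fin (t + 2) → S) i.castSucc.castSucc)
            ((Fin.snoc y z : Fin (t + 2) → S) i.castSucc.succ)
            = T (y i.castSucc) (y i.succ) := by
          intro i
          rw [Fin.succ_castSucc, Fin.snoc_castSucc, Fin.snoc_castSucc]
        rw [Finset.prod_congr rfl fun i _ => hmid i, hlast]
        ring
      rw [hpre, hpath]
      ring
    calc (∑ y : Fin (t + 1) → S, ∑ z : S,
            f (fun i => (Fin.snoc y z : Fin (t + 2) → S)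
              (Fin.castLE (Nat.succ_le_succ (le_trans hst (Nat.le_succ t))) i))
            * pathProb T π (Fin.snoc y z : Fin (t + 2) → S))
        = ∑ y : Fin (t + 1) → S, ∑ z : S,
            (f (fun i => y (Fin.castLE (Nat.succ_le_succ hst) i)) * pathProb T π y)
              * T (y (Fin.last t)) z :=
          Finset.sum_congr rfl fun y _ => Finset.sum_congr rfl fun z _ => step y z
      _ = ∑ y : Fin (t + 1) → S,
            f (fun i => y (Fin.castLE (Nat.succ_le_succ hst) i)) * pathProb T π y := by
          refine Finset.sum_congr rfl fun y _ => ?_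
          rw [← Finset.mul_sum, hT1, mul_one]
      _ = _ := ih

lemma avoid_bound {S : Type*} [Fintype S] [PartialOrder S] (T : Matrix S S ℝ)
    (hT0 : ∀ a b, 0 ≤ T a b) (hT1 : ∀ a, ∑ b, T a b = 1)
    (hdown : ∀ a b, T a b ≠ 0 → b ≤ a) (δmin : S) (F : Finset S)
    (η' : ℝ) (hη'0 : 0 ≤ η')
    (hdiag : ∀ a : S, a ≠ δmin → a ∉ F → T a a ≤ η')
    (π : S → ℝ) (hπ0 : ∀ a, 0 ≤ π a) (hπ1 : ∑ a, π a = 1)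
    (η'' : ℝ) (hη'' : η' < η'') :
    ∃ C > (0:ℝ), ∀ t : ℕ, avoidProb T π δmin F t ≤ C * η'' ^ t := by
  set ε : ℝ := min (η'' - η') 1 with hεdef
  have hε0 : 0 < ε := lt_min (by linarith) one_pos
  have hε1 : ε ≤ 1 := min_le_right _ _
  have hsum : η' + ε ≤ η'' := by
    have := min_le_left (η'' - η') 1
    simp only [← hεdef] at this
    linarith
  have hη''0 : 0 < η'' := lt_of_le_of_lt hη'0 hη''
  have hεinv : (1:ℝ) ≤ ε⁻¹ := (one_le_inv₀ hε0).mpr hε1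
  refine ⟨ε⁻¹ ^ Fintype.card S, pow_pos (inv_pos.mpr hε0) _, fun t => ?_⟩
  rw [avoidProb_eq]
  have hbd : ∀ a : S, π a * hProb T (fun b => b ≠ δmin ∧ b ∉ F) a t
      ≤ π a * (ε⁻¹ ^ Fintype.card S * η'' ^ t) := by
    intro a
    refine mul_le_mul_of_nonneg_left ?_ (hπ0 a)
    refine le_trans (hProb_bound T hT0 hT1 hdown _ η' ε η''
      (fun b hb => hdiag b hb.1 hb.2) hε0 hε1 hsum hη''0 t a) ?_
    refine mul_le_mul_of_nonneg_right ?_ (pow_nonneg hη''0.le t)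
    refine pow_le_pow_right₀ hεinv ?_
    rw [← Finset.card_univ]
    exact Finset.card_filter_le _ _
  calc (∑ a, π a * hProb T (fun b => b ≠ δmin ∧ b ∉ F) a t)
      ≤ ∑ a, π a * (ε⁻¹ ^ Fintype.card S * η'' ^ t) := Finset.sum_le_sum fun a _ => hbd a
    _ = ε⁻¹ ^ Fintype.card S * η'' ^ t := by rw [← Finset.sum_mul, hπ1, one_mul]

lemma lateHit_le_avoid {S : Type*} [Fintype S] (T : Matrix S S ℝ)
    (hT0 : ∀ a b, 0 ≤ T a b) (hT1 : ∀ a, ∑ b, T a b = 1)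
    (π : S → ℝ) (hπ0 : ∀ a, 0 ≤ π a) (δmin : S) (F : Finset S)
    (γ : ℝ) (hγ0 : 0 < γ) (hγ1 : γ ≤ 1) (t : ℕ) :
    lateHitProb T π δmin F γ t ≤ avoidProb T π δmin F ⌊γ * t⌋₊ := by
  set s : ℕ := ⌊γ * t⌋₊ with hsdef
  have hst : s ≤ t := by
    have h1 : γ * t ≤ (t:ℝ) := by
      nlinarith [Nat.cast_nonneg (α := ℝ) t]
    calc s ≤ ⌊(t:ℝ)⌋₊ := Nat.floor_le_floor h1
      _ = t := Nat.floor_natCast t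
  have hγt0 : 0 ≤ γ * t := mul_nonneg hγ0.le (Nat.cast_nonneg t)
  have hsle : (s:ℝ) ≤ γ * t := Nat.floor_le hγt0
  set f : (Fin (s + 1) → S) → ℝ :=
    fun y => if (∀ i, y i ≠ δmin ∧ y i ∉ F) then 1 else 0 with hfdef
  have h1 : lateHitProb T π δmin F γ t
      ≤ ∑ x : Fin (t + 1) → S,
          f (fun i => x (Fin.castLE (Nat.succ_le_succ hst) i)) * pathProb T π x := by
    unfold lateHitProb
    refine Finset.sum_le_sum fun x _ => ?_
    by_cases hA : (∀ i, x i ≠ δmin) ∧ (∀ i : Fin (t + 1), ((i : ℕ) : ℝ) ≤ γ * t → x i ∉ F)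
    · rw [if_pos hA]
      have hB : ∀ i : Fin (s + 1), x (Fin.castLE (Nat.succ_le_succ hst) i) ≠ δmin ∧
          x (Fin.castLE (Nat.succ_le_succ hst) i) ∉ F := by
        intro i
        refine ⟨hA.1 _, hA.2 _ ?_⟩
        have hi : ((Fin.castLE (Nat.succ_le_succ hst) i : Fin (t + 1)) : ℕ) = (i : ℕ) := rfl
        rw [hi]
        have : ((i : ℕ) : ℝ) ≤ (s : ℝ) := by
          exact_mod_cast Nat.lt_succ_iff.mp i.isLt
        linarith
      rw [hfdef]
      simp only [if_pos hB, one_mul]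
      exact le_refl _
    · rw [if_neg hA]
      refine mul_nonneg ?_ (pathProb_nonneg T π hT0 hπ0 x)
      rw [hfdef]
      simp only
      split_ifs <;> norm_num
  have h2 : (∑ x : Fin (t + 1) → S,
        f (fun i => x (Fin.castLE (Nat.succ_le_succ hst) i)) * pathProb T π x)
      = ∑ y : Fin (s + 1) → S, f y * pathProb T π y := marginal T hT1 π s f t hst
  have h3 : (∑ y : Fin (s + 1) → S, f y * pathProb T π y) = avoidProb T π δmin F s := by
    unfold avoidProb
    refine Finset.sum_congr rfl fun y _ => ?_
    rw [hfdef]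
    by_cases h : ∀ i, y i ≠ δmin ∧ y i ∉ F <;> simp [h]
  rw [h2, h3] at h1
  exact h1

/-- tail upper bound off the maximal-sojourn states.  Let `η'` be the maximal
sojourn probability over non-absorbing states outside `F`.  Then for every `η'' > η'` there is
`C > 0` with `P(τ ∧ τ_F > t) ≤ C (η'')^t`; and, combined with the lower bound
`P(τ > t) ≥ c η^t` (with `η > η'`), there is `γ ∈ (0,1)` with
`P(τ_F > γt | τ > t) → 0` as `t → ∞`. -/
theorem tail_upper_bound {S : Type*} [Fintype S] [DecidableEq S] [PartialOrder S]
    (T : Matrix S S ℝ)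
    (hT0 : ∀ a b, 0 ≤ T a b) (hT1 : ∀ a, ∑ b, T a b = 1)
    (hdown : ∀ a b, T a b ≠ 0 → b ≤ a)
    (δmin : S) (habs : ∀ a, T a a = 1 ↔ a = δmin)
    (F : Finset S) (hFmin : δmin ∉ F) (hFne : F.Nonempty)
    (η : ℝ) (hη0 : 0 < η) (hη1 : η ≤ 1) (hF : ∀ δ ∈ F, T δ δ = η)
    (hne : (Finset.univ.filter fun a : S => a ≠ δmin ∧ a ∉ F).Nonempty)
    (η' : ℝ)
    (hη' : η' = (Finset.univ.filter fun a : S => a ≠ δmin ∧ a ∉ F).sup' hne fun a => T a a)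
    (hη'lt : η' < η)
    (π : S → ℝ) (hπ0 : ∀ a, 0 ≤ π a) (hπ1 : ∑ a, π a = 1)
    (hlow : ∃ c > (0 : ℝ), ∀ t : ℕ, c * η ^ t ≤ survivalProb T π δmin t) :
    (∀ η'' > η', ∃ C > (0 : ℝ), ∀ t : ℕ, avoidProb T π δmin F t ≤ C * η'' ^ t) ∧
      ∃ γ ∈ Set.Ioo (0 : ℝ) 1,
        Filter.Tendsto (fun t => lateHitProb T π δmin F γ t / survivalProb T π δmin t)
          Filter.atTop (nhds 0) := by
  have hη'0 : 0 ≤ η' := by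
    obtain ⟨a0, ha0⟩ := id hne
    have h1 : 0 ≤ T a0 a0 := hT0 a0 a0
    have h2 : T a0 a0 ≤ (Finset.univ.filter fun a : S => a ≠ δmin ∧ a ∉ F).sup' hne
        fun a => T a a := Finset.le_sup' (fun a => T a a) ha0
    rw [hη']; linarith
  have hdiag : ∀ a : S, a ≠ δmin → a ∉ F → T a a ≤ η' := by
    intro a h1 h2
    rw [hη']
    exact Finset.le_sup' (fun a => T a a) (Finset.mem_filter.mpr ⟨Finset.mem_univ a, h1, h2⟩)
  have part1 : ∀ η'' > η', ∃ C > (0:ℝ), ∀ t : ℕ, avoidProb T π δmin F t ≤ C * η'' ^ t :=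
    fun η'' h => avoid_bound T hT0 hT1 hdown δmin F η' hη'0 hdiag π hπ0 hπ1 η'' h
  refine ⟨part1, ?_⟩
  set η2 : ℝ := (η' + η) / 2 with hη2def
  have hη2gt : η' < η2 := by rw [hη2def]; linarith
  have hη2lt : η2 < η := by rw [hη2def]; linarith
  have hη2pos : 0 < η2 := lt_of_le_of_lt hη'0 hη2gt
  have hη2lt1 : η2 < 1 := lt_of_lt_of_le hη2lt hη1
  obtain ⟨C, hC0, hC⟩ := part1 η2 hη2gt
  obtain ⟨c, hc0, hc⟩ := hlow
  have hlog2 : Real.log η2 < 0 := Real.log_neg hη2pos hη2lt1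
  have hlogη : Real.log η ≤ 0 := Real.log_nonpos hη0.le hη1
  have hloglt : Real.log η2 < Real.log η := Real.log_lt_log hη2pos hη2lt
  set L : ℝ := Real.log η / Real.log η2 with hLdef
  have hL0 : 0 ≤ L := by
    rw [hLdef, div_nonneg_iff]
    right
    exact ⟨hlogη, hlog2.le⟩
  have hL1 : L < 1 := by
    rw [hLdef, div_lt_one_of_neg hlog2]
    exact hloglt
  set γ : ℝ := (L + 1) / 2 with hγdef
  have hγ0 : 0 < γ := by rw [hγdef]; linarith
  have hγ1 : γ < 1 := by rw [hγdef]; linarith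
  have hγL : L < γ := by rw [hγdef]; linarith
  have hkey : η2 ^ γ < η := by
    have h1 : γ * Real.log η2 < L * Real.log η2 := mul_lt_mul_of_neg_right hγL hlog2
    have h2 : L * Real.log η2 = Real.log η := div_mul_cancel₀ _ (ne_of_lt hlog2)
    rw [Real.rpow_def_of_pos hη2pos]
    calc Real.exp (Real.log η2 * γ) = Real.exp (γ * Real.log η2) := by rw [mul_comm]
      _ < Real.exp (Real.log η) := Real.exp_lt_exp.mpr (by rw [← h2]; exact h1)
      _ = η := Real.exp_log hη0
  set ρ : ℝ := η2 ^ γ / η with hρdef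
  have hρ0 : 0 ≤ ρ := div_nonneg (Real.rpow_nonneg hη2pos.le _) hη0.le
  have hρ1 : ρ < 1 := (div_lt_one hη0).mpr hkey
  refine ⟨γ, ⟨hγ0, hγ1⟩, ?_⟩
  have hsurv : ∀ t : ℕ, 0 < survivalProb T π δmin t := fun t =>
    lt_of_lt_of_le (mul_pos hc0 (pow_pos hη0 t)) (hc t)
  have hlate0 : ∀ t : ℕ, 0 ≤ lateHitProb T π δmin F γ t := by
    intro t
    unfold lateHitProb
    refine Finset.sum_nonneg fun x _ => ?_
    split_ifs
    · exact pathProb_nonneg T π hT0 hπ0 x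
    · exact le_refl 0
  set D : ℝ := C / (c * η2) with hDdef
  have hbound : ∀ t : ℕ, lateHitProb T π δmin F γ t / survivalProb T π δmin t
      ≤ D * ρ ^ t := by
    intro t
    have s1 : lateHitProb T π δmin F γ t ≤ C * η2 ^ ⌊γ * t⌋₊ :=
      le_trans (lateHit_le_avoid T hT0 hT1 π hπ0 δmin F γ hγ0 hγ1.le t) (hC _)
    have s2 : (η2 : ℝ) ^ (⌊γ * t⌋₊ : ℕ) ≤ η2⁻¹ * (η2 ^ γ) ^ t := by
      have hfl : γ * t - 1 ≤ ((⌊γ * t⌋₊ : ℕ) : ℝ) := by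
        have := Nat.lt_floor_add_one (γ * (t:ℝ))
        linarith
      have e1 : (η2 : ℝ) ^ (⌊γ * t⌋₊ : ℕ) = η2 ^ (((⌊γ * t⌋₊ : ℕ) : ℕ) : ℝ) :=
        (Real.rpow_natCast η2 _).symm
      have e2 : η2 ^ (((⌊γ * t⌋₊ : ℕ) : ℕ) : ℝ) ≤ η2 ^ (γ * t - 1) :=
        Real.rpow_le_rpow_of_exponent_ge hη2pos hη2lt1.le hfl
      have e3 : η2 ^ (γ * (t:ℝ) - 1) = η2⁻¹ * (η2 ^ γ) ^ t := by
        rw [Real.rpow_sub hη2pos, Real.rpow_one]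
        rw [Real.rpow_mul hη2pos.le, Real.rpow_natCast]
        ring
      rw [e1, ← e3]
      exact e2
    have s3 : lateHitProb T π δmin F γ t ≤ (C * η2⁻¹) * (η2 ^ γ) ^ t := by
      calc lateHitProb T π δmin F γ t ≤ C * η2 ^ ⌊γ * t⌋₊ := s1
        _ ≤ C * (η2⁻¹ * (η2 ^ γ) ^ t) := mul_le_mul_of_nonneg_left s2 hC0.le
        _ = (C * η2⁻¹) * (η2 ^ γ) ^ t := by ring
    have s4 : lateHitProb T π δmin F γ t / survivalProb T π δmin t
        ≤ ((C * η2⁻¹) * (η2 ^ γ) ^ t) / (c * η ^ t) := by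
      refine div_le_div₀ ?_ s3 (mul_pos hc0 (pow_pos hη0 t)) (hc t)
      exact mul_nonneg (mul_nonneg hC0.le (inv_nonneg.mpr hη2pos.le))
        (pow_nonneg (Real.rpow_nonneg hη2pos.le _) t)
    refine le_trans s4 (le_of_eq ?_)
    rw [hDdef, hρdef, div_pow]
    field_simp
  refine squeeze_zero (fun t => div_nonneg (hlate0 t) (hsurv t).le) hbound ?_
  have h := (tendsto_pow_atTop_nhds_zero_of_lt_one hρ0 hρ1).const_mul D
  simpa using h
end
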